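/- arXiv:1806.04896 — 5 statements merged into one kernel-verified Lean document; each statement's English description precedes it below -/
import Mathlib

section
/- Let u and v be Lipschitz functions on [x−h, x+h] with Lipschitz constants l₁ and l₂ respectively, let t_{x,1} < ⋯ < t_{x,N} be points of a regular design (generated by a density f with 0 < inf f ≤ sup f < ∞) lying in [x−h, x+h] with N ≠ 0 and nh ≥ 1, set d_{x,i} = t_{x,i+1} − t_{x,i}, and let t'_{x,i} ∈ [t_{x,i}, t_{x,i+1}] be arbitrary. Then Σ_{i=1}^{N−1} u(t_{x,i}) v(t'_{x,i}) d_{x,i} = ∫_{x−h}^{x+h} u(t) v(t) dt + Δ_{n,h}, where |Δ_{n,h}| ≤ c₁ l₁ (h/n) sup_{[x−h,x+h]}|v| + c₂ l₂ (h/n) sup_{[x−h,x+h]}|u| + (2c₃/n) sup_{t ∈ [x−h,t_{x,1}] ∪ [t_{x,N}, x+h]} |u(t)v(t)| for some positive constants c₁, c₂, c₃ depending only on f. -/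
open MeasureTheory

/- STATEMENT 2 (integral approximation of a sum): Let u, v be Lipschitz on
   [x−h, x+h] with constants l₁, l₂, let t_{x,1} < ⋯ < t_{x,N} be the points
   of the regular design (generated by a density f with 0 < inf f ≤ sup f < ∞)
   lying in [x−h,x+h] with N ≠ 0 and nh ≥ 1, d_{x,i} = t_{x,i+1} − t_{x,i},
   and t'_{x,i} ∈ [t_{x,i}, t_{x,i+1}] arbitrary.  Then
   Σ_{i=1}^{N−1} u(t_{x,i}) v(t'_{x,i}) d_{x,i} = ∫_{x−h}^{x+h} u v + Δ, with
   |Δ| ≤ c₁ l₁ (h/n) sup|v| + c₂ l₂ (h/n) sup|u| + (2c₃/n) sup_{edges}|u·v|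
   for positive constants c₁, c₂, c₃ depending only on f.
   The design points in the window are encoded as t n (k+1), …, t n (k+N). -/


lemma aux_ii {f : ℝ → ℝ} (hf_cont : ContinuousOn f (Set.Icc 0 1))
    {a b : ℝ} (ha : a ∈ Set.Icc (0:ℝ) 1) (hb : b ∈ Set.Icc (0:ℝ) 1) :
    IntervalIntegrable f volume a b := by
  apply ContinuousOn.intervalIntegrable
  apply hf_cont.mono
  exact Set.uIcc_subset_Icc ha hb

lemma aux_sub {f : ℝ → ℝ} (hf_cont : ContinuousOn f (Set.Icc 0 1))
    {a b : ℝ} (ha : a ∈ Set.Icc (0:ℝ) 1) (hb : b ∈ Set.Icc (0:ℝ) 1) :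
    ∫ s in a..b, f s = (∫ s in (0:ℝ)..b, f s) - ∫ s in (0:ℝ)..a, f s := by
  rw [intervalIntegral.integral_interval_sub_left
    (aux_ii hf_cont (by simp) hb) (aux_ii hf_cont (by simp) ha)]

lemma aux_lb {f : ℝ → ℝ} {cf : ℝ}
    (hf_lb : ∀ s ∈ Set.Icc (0:ℝ) 1, cf ≤ f s)
    (hf_cont : ContinuousOn f (Set.Icc 0 1))
    {a b : ℝ} (hab : a ≤ b) (ha : a ∈ Set.Icc (0:ℝ) 1) (hb : b ∈ Set.Icc (0:ℝ) 1) :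
    cf * (b - a) ≤ ∫ s in a..b, f s := by
  have h1 : (∫ _ in a..b, cf) ≤ ∫ s in a..b, f s := by
    apply intervalIntegral.integral_mono_on hab (by simp) (aux_ii hf_cont ha hb)
    intro s hs
    exact hf_lb s ⟨le_trans ha.1 hs.1, le_trans hs.2 hb.2⟩
  simpa [mul_comm] using h1

lemma aux_spacing {f : ℝ → ℝ} {cf : ℝ} (hcf : 0 < cf)
    (hf_lb : ∀ s ∈ Set.Icc (0:ℝ) 1, cf ≤ f s)
    (hf_cont : ContinuousOn f (Set.Icc 0 1))
    {t : ℕ → ℕ → ℝ}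
    (ht_mem : ∀ n i : ℕ, 1 ≤ i → i ≤ n → t n i ∈ Set.Icc (0:ℝ) 1)
    (ht_def : ∀ n i : ℕ, 1 ≤ i → i ≤ n →
      ∫ s in (0:ℝ)..(t n i), f s = (i : ℝ) / n)
    (ht_mono : ∀ n : ℕ, StrictMonoOn (t n) (Set.Icc 1 n))
    {n j : ℕ} (hj : 1 ≤ j) (hjn : j + 1 ≤ n) :
    t n (j+1) - t n j ≤ 1 / (cf * n) := by
  have hn : 0 < (n:ℝ) := by exact_mod_cast Nat.pos_of_ne_zero (by omega)
  have ha := ht_mem n j hj (by omega)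
  have hb := ht_mem n (j+1) (by omega) hjn
  have hab : t n j ≤ t n (j+1) :=
    le_of_lt ((ht_mono n) (Set.mem_Icc.2 ⟨hj, by omega⟩) (Set.mem_Icc.2 ⟨by omega, hjn⟩) (by omega))
  have h1 : cf * (t n (j+1) - t n j) ≤ 1 / n := by
    have := aux_lb hf_lb hf_cont hab ha hb
    rw [aux_sub hf_cont ha hb, ht_def n (j+1) (by omega) hjn, ht_def n j hj (by omega)] at this
    push_cast at this
    calc cf * (t n (j+1) - t n j) ≤ ((j:ℝ)+1)/n - j/n := this
    _ = 1/n := by field_simp; ring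
  rw [le_div_iff₀ (by positivity : (0:ℝ) < cf * n)]
  calc (t n (j+1) - t n j) * (cf * n) = (cf * (t n (j+1) - t n j)) * n := by ring
  _ ≤ (1/n) * n := by nlinarith
  _ = 1 := by field_simp

lemma aux_t1 {f : ℝ → ℝ} {cf : ℝ} (hcf : 0 < cf)
    (hf_lb : ∀ s ∈ Set.Icc (0:ℝ) 1, cf ≤ f s)
    (hf_cont : ContinuousOn f (Set.Icc 0 1))
    {t : ℕ → ℕ → ℝ}
    (ht_mem : ∀ n i : ℕ, 1 ≤ i → i ≤ n → t n i ∈ Set.Icc (0:ℝ) 1)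
    (ht_def : ∀ n i : ℕ, 1 ≤ i → i ≤ n →
      ∫ s in (0:ℝ)..(t n i), f s = (i : ℝ) / n)
    {n : ℕ} (hn1 : 1 ≤ n) :
    t n 1 ≤ 1 / (cf * n) := by
  have hn : 0 < (n:ℝ) := by exact_mod_cast Nat.pos_of_ne_zero (by omega)
  have ha := ht_mem n 1 le_rfl hn1
  have h1 : cf * (t n 1 - 0) ≤ 1 / n := by
    have := aux_lb hf_lb hf_cont ha.1 (by simp) ha
    rw [ht_def n 1 le_rfl hn1] at this
    simpa using this
  rw [le_div_iff₀ (by positivity : (0:ℝ) < cf * n)]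
  calc t n 1 * (cf * n) = (cf * (t n 1 - 0)) * n := by ring
  _ ≤ (1/n) * n := by nlinarith
  _ = 1 := by field_simp

lemma aux_tn {f : ℝ → ℝ} {cf : ℝ} (hcf : 0 < cf)
    (hf_lb : ∀ s ∈ Set.Icc (0:ℝ) 1, cf ≤ f s)
    (hf_cont : ContinuousOn f (Set.Icc 0 1))
    (hf_density : ∫ s in (0:ℝ)..1, f s = 1)
    {t : ℕ → ℕ → ℝ}
    (ht_mem : ∀ n i : ℕ, 1 ≤ i → i ≤ n → t n i ∈ Set.Icc (0:ℝ) 1)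
    (ht_def : ∀ n i : ℕ, 1 ≤ i → i ≤ n →
      ∫ s in (0:ℝ)..(t n i), f s = (i : ℝ) / n)
    {n : ℕ} (hn1 : 1 ≤ n) :
    t n n = 1 := by
  have hn : 0 < (n:ℝ) := by exact_mod_cast Nat.pos_of_ne_zero (by omega)
  have ha := ht_mem n n hn1 le_rfl
  have h0 : ∫ s in (t n n)..1, f s = 0 := by
    rw [aux_sub hf_cont ha (by simp), hf_density, ht_def n n hn1 le_rfl]
    field_simp; norm_num
  have h1 : cf * (1 - t n n) ≤ 0 := h0 ▸ aux_lb hf_lb hf_cont ha.2 ha (by simp)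
  nlinarith [ha.2]

set_option maxHeartbeats 2000000

theorem sum_to_integral_approximation
    (f : ℝ → ℝ) (cf Cf : ℝ)
    (hcf : 0 < cf)
    (hf_lb : ∀ s ∈ Set.Icc (0:ℝ) 1, cf ≤ f s)
    (hf_ub : ∀ s ∈ Set.Icc (0:ℝ) 1, f s ≤ Cf)
    (hf_cont : ContinuousOn f (Set.Icc 0 1))
    (hf_density : ∫ s in (0:ℝ)..1, f s = 1)
    (t : ℕ → ℕ → ℝ)
    (ht_mem : ∀ n i : ℕ, 1 ≤ i → i ≤ n → t n i ∈ Set.Icc (0:ℝ) 1)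
    (ht_def : ∀ n i : ℕ, 1 ≤ i → i ≤ n →
      ∫ s in (0:ℝ)..(t n i), f s = (i : ℝ) / n)
    (ht_mono : ∀ n : ℕ, StrictMonoOn (t n) (Set.Icc 1 n)) :
    ∃ c₁ c₂ c₃ : ℝ, 0 < c₁ ∧ 0 < c₂ ∧ 0 < c₃ ∧
      ∀ (n k N : ℕ) (x h : ℝ) (u v : ℝ → ℝ) (l₁ l₂ : ℝ) (t' : ℕ → ℝ),
        x ∈ Set.Ioo (0:ℝ) 1 → 0 < h →
        Set.Icc (x - h) (x + h) ⊆ Set.Icc (0:ℝ) 1 →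
        N ≠ 0 → 1 ≤ (n : ℝ) * h → k + N ≤ n →
        (∀ i : ℕ, 1 ≤ i → i ≤ N → t n (k + i) ∈ Set.Icc (x - h) (x + h)) →
        (∀ j : ℕ, 1 ≤ j → j ≤ n → t n j ∈ Set.Icc (x - h) (x + h) →
          k + 1 ≤ j ∧ j ≤ k + N) →
        0 ≤ l₁ → 0 ≤ l₂ →
        (∀ s ∈ Set.Icc (x - h) (x + h), ∀ s' ∈ Set.Icc (x - h) (x + h),
          |u s - u s'| ≤ l₁ * |s - s'|) →
        (∀ s ∈ Set.Icc (x - h) (x + h), ∀ s' ∈ Set.Icc (x - h) (x + h),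
          |v s - v s'| ≤ l₂ * |s - s'|) →
        (∀ i : ℕ, 1 ≤ i → i + 1 ≤ N →
          t' i ∈ Set.Icc (t n (k + i)) (t n (k + i + 1))) →
        |(∑ i ∈ Finset.Icc 1 (N - 1),
            u (t n (k + i)) * v (t' i) * (t n (k + i + 1) - t n (k + i)))
          - ∫ s in (x - h)..(x + h), u s * v s|
        ≤ c₁ * l₁ * (h / n) * sSup ((fun s => |v s|) '' Set.Icc (x - h) (x + h))
          + c₂ * l₂ * (h / n) * sSup ((fun s => |u s|) '' Set.Icc (x - h) (x + h))
          + (2 * c₃ / n) * sSup ((fun s => |u s * v s|) ''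
              (Set.Icc (x - h) (t n (k + 1)) ∪ Set.Icc (t n (k + N)) (x + h))) := by
  refine ⟨2/cf, 2/cf, 1/cf, by positivity, by positivity, by positivity, ?_⟩
  intro n k N x h u v l₁ l₂ t' hx hh hsub hN hnh hkN hwin hyield hl₁ hl₂ hu hv ht'
  have hn0 : 0 < n := by omega
  have hn : 0 < (n:ℝ) := by exact_mod_cast hn0
  set W := Set.Icc (x-h) (x+h) with hWdef
  have hxW : x ∈ W := ⟨by linarith, by linarith⟩
  set T : ℕ → ℝ := fun i => t n (k+i) with hTdef
  have hTmem : ∀ i, 1 ≤ i → i ≤ N → T i ∈ W := fun i h1 h2 => hwin i h1 h2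
  have hTle : ∀ i j, 1 ≤ i → i ≤ j → j ≤ N → T i ≤ T j := by
    intro i j h1 h2 h3
    rcases eq_or_lt_of_le h2 with rfl | hlt
    · exact le_rfl
    · exact le_of_lt ((ht_mono n) (Set.mem_Icc.2 ⟨by omega, by omega⟩)
        (Set.mem_Icc.2 ⟨by omega, by omega⟩) (by omega))
  have hd : ∀ i : ℕ, 1 ≤ i → i+1 ≤ N → T (i+1) - T i ≤ 1/(cf*n) := by
    intro i h1 h2
    exact aux_spacing hcf hf_lb hf_cont ht_mem ht_def ht_mono (j := k+i) (by omega) (by omega)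
  -- left edge
  have hL0 : x - h ≤ T 1 := (hTmem 1 le_rfl (by omega)).1
  have hR0 : T N ≤ x + h := (hTmem N (by omega) le_rfl).2
  have hL : T 1 - (x-h) ≤ 1/(cf*n) := by
    by_cases hk : k = 0
    · have h1 := aux_t1 hcf hf_lb hf_cont ht_mem ht_def (n := n) (by omega)
      have h0 : (0:ℝ) ≤ x - h := (hsub ⟨le_rfl, by linarith⟩).1
      subst hk
      have hTe : T 1 = t n 1 := by simp [hTdef]
      rw [hTe]; linarith
    · have hk1 : 1 ≤ k := by omega
      have hnot : t n k ∉ W := by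
        intro hmem
        have := hyield k hk1 (by omega) hmem
        omega
      have hle : t n k ≤ T 1 :=
        le_of_lt ((ht_mono n) (Set.mem_Icc.2 ⟨by omega, by omega⟩)
          (Set.mem_Icc.2 ⟨by omega, by omega⟩) (by omega))
      have hlt : t n k < x - h := by
        by_contra hc
        push_neg at hc
        exact hnot ⟨hc, le_trans hle (hTmem 1 le_rfl (by omega)).2⟩
      have := aux_spacing hcf hf_lb hf_cont ht_mem ht_def ht_mono (n := n) (j := k) hk1 (by omega)
      have hTe : T 1 = t n (k+1) := rfl
      linarith
  have hR : (x+h) - T N ≤ 1/(cf*n) := by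
    by_cases hkN' : k + N = n
    · have h1 := aux_tn hcf hf_lb hf_cont hf_density ht_mem ht_def (n := n) (by omega)
      have h2 : x + h ≤ 1 := (hsub ⟨by linarith, le_rfl⟩).2
      have hTe : T N = t n n := by rw [hTdef]; simp [hkN']
      have : (0:ℝ) < 1/(cf*n) := by positivity
      rw [hTe, h1]; linarith
    · have hnot : t n (k+N+1) ∉ W := by
        intro hmem
        have := hyield (k+N+1) (by omega) (by omega) hmem
        omega
      have hge : T N ≤ t n (k+N+1) :=
        le_of_lt ((ht_mono n) (Set.mem_Icc.2 ⟨by omega, by omega⟩)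
          (Set.mem_Icc.2 ⟨by omega, by omega⟩) (by omega))
      have hlt : x + h < t n (k+N+1) := by
        by_contra hc
        push_neg at hc
        exact hnot ⟨le_trans (hTmem N (by omega) le_rfl).1 hge, hc⟩
      have := aux_spacing hcf hf_lb hf_cont ht_mem ht_def ht_mono (n := n) (j := k+N) (by omega) (by omega)
      have hTe : T N = t n (k+N) := rfl
      linarith
  -- continuity and integrability
  have hu_cont : ContinuousOn u W := by
    refine LipschitzOnWith.continuousOn (K := Real.toNNReal l₁) ?_
    refine LipschitzOnWith.of_dist_le_mul fun a ha b hb => ?_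
    rw [Real.dist_eq, Real.dist_eq, Real.coe_toNNReal _ hl₁]
    exact hu a ha b hb
  have hv_cont : ContinuousOn v W := by
    refine LipschitzOnWith.continuousOn (K := Real.toNNReal l₂) ?_
    refine LipschitzOnWith.of_dist_le_mul fun a ha b hb => ?_
    rw [Real.dist_eq, Real.dist_eq, Real.coe_toNNReal _ hl₂]
    exact hv a ha b hb
  have hg_cont : ContinuousOn (fun s => u s * v s) W := hu_cont.mul hv_cont
  have hgi : ∀ a ∈ W, ∀ b ∈ W, IntervalIntegrable (fun s => u s * v s) volume a b := by
    intro a ha b hb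
    exact (hg_cont.mono (Set.uIcc_subset_Icc ha hb)).intervalIntegrable
  -- sups
  set Mu := sSup ((fun s => |u s|) '' W) with hMudef
  set Mv := sSup ((fun s => |v s|) '' W) with hMvdef
  have hMu_bdd : BddAbove ((fun s => |u s|) '' W) := by
    refine ⟨|u x| + l₁ * (2*h), ?_⟩
    rintro y ⟨s, hs, rfl⟩
    have h1 := hu s hs x hxW
    have h2 : |s - x| ≤ 2*h := by
      rw [abs_le]; constructor <;> [linarith [hs.1]; linarith [hs.2]]
    have h3 : |u s| - |u x| ≤ |u s - u x| := abs_sub_abs_le_abs_sub _ _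
    nlinarith
  have hMv_bdd : BddAbove ((fun s => |v s|) '' W) := by
    refine ⟨|v x| + l₂ * (2*h), ?_⟩
    rintro y ⟨s, hs, rfl⟩
    have h1 := hv s hs x hxW
    have h2 : |s - x| ≤ 2*h := by
      rw [abs_le]; constructor <;> [linarith [hs.1]; linarith [hs.2]]
    have h3 : |v s| - |v x| ≤ |v s - v x| := abs_sub_abs_le_abs_sub _ _
    nlinarith
  have hMu_le : ∀ s ∈ W, |u s| ≤ Mu := fun s hs => le_csSup hMu_bdd ⟨s, hs, rfl⟩
  have hMv_le : ∀ s ∈ W, |v s| ≤ Mv := fun s hs => le_csSup hMv_bdd ⟨s, hs, rfl⟩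
  have hMu0 : 0 ≤ Mu := le_trans (abs_nonneg _) (hMu_le x hxW)
  have hMv0 : 0 ≤ Mv := le_trans (abs_nonneg _) (hMv_le x hxW)
  set Eset := Set.Icc (x - h) (t n (k + 1)) ∪ Set.Icc (t n (k + N)) (x + h) with hEdef
  have hEsub : Eset ⊆ W := by
    apply Set.union_subset
    · exact Set.Icc_subset_Icc le_rfl (hTmem 1 le_rfl (by omega)).2
    · exact Set.Icc_subset_Icc (hTmem N (by omega) le_rfl).1 le_rfl
  set Me := sSup ((fun s => |u s * v s|) '' Eset) with hMedef
  have hMe_bdd : BddAbove ((fun s => |u s * v s|) '' Eset) := by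
    refine ⟨Mu * Mv, ?_⟩
    rintro y ⟨s, hs, rfl⟩
    show |u s * v s| ≤ Mu * Mv
    rw [abs_mul]
    exact mul_le_mul (hMu_le s (hEsub hs)) (hMv_le s (hEsub hs)) (abs_nonneg _) hMu0
  have hMe_le : ∀ s ∈ Eset, |u s * v s| ≤ Me := fun s hs => le_csSup hMe_bdd ⟨s, hs, rfl⟩
  have hMe0 : 0 ≤ Me := by
    have hmem : x - h ∈ Eset := Or.inl ⟨le_rfl, hL0⟩
    exact le_trans (abs_nonneg _) (hMe_le _ hmem)
  -- decomposition
  set g : ℝ → ℝ := fun s => u s * v s with hgdef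
  set a : ℕ → ℝ := fun i => T (1+i) with hadef
  have hamem : ∀ i ≤ N - 1, a i ∈ W := fun i hi => hTmem (1+i) (by omega) (by omega)
  have ha0 : a 0 = T 1 := by simp [hadef]
  have haN : a (N-1) = T N := by
    have : 1 + (N-1) = N := by omega
    simp only [hadef, this]
  have hsum_int : ∑ i ∈ Finset.range (N-1), ∫ s in (a i)..(a (i+1)), g s
      = ∫ s in (T 1)..(T N), g s := by
    have hint : ∀ i < N-1, IntervalIntegrable g volume (a i) (a (i+1)) :=
      fun i hi => hgi _ (hamem i (by omega)) _ (hamem (i+1) (by omega))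
    have hh' := intervalIntegral.sum_integral_adjacent_intervals (μ := volume) hint
    rw [ha0, haN] at hh'
    exact hh'
  have hxhW : x - h ∈ W := ⟨le_rfl, by linarith⟩
  have hxhW' : x + h ∈ W := ⟨by linarith, le_rfl⟩
  have hT1W := hTmem 1 le_rfl (by omega)
  have hTNW := hTmem N (by omega) le_rfl
  have hsplit : ∫ s in (x-h)..(x+h), g s
      = (∫ s in (x-h)..(T 1), g s) + (∫ s in (T 1)..(T N), g s)
        + (∫ s in (T N)..(x+h), g s) := by
    rw [intervalIntegral.integral_add_adjacent_intervals (hgi _ hxhW _ hT1W) (hgi _ hT1W _ hTNW),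
        intervalIntegral.integral_add_adjacent_intervals (hgi _ hxhW _ hTNW) (hgi _ hTNW _ hxhW')]
  have hIcc : Finset.Icc 1 (N-1) = Finset.Ico 1 N := by
    rw [← Finset.Ico_add_one_right_eq_Icc]; congr 1; omega
  set S := ∑ i ∈ Finset.Icc 1 (N-1),
      u (t n (k+i)) * v (t' i) * (t n (k+i+1) - t n (k+i)) with hSdef
  have hS : S = ∑ i ∈ Finset.range (N-1), u (a i) * v (t' (1+i)) * (a (i+1) - a i) := by
    rw [hSdef, hIcc, Finset.sum_Ico_eq_sum_range]
    rfl
  set C0 := (l₁*Mv + l₂*Mu)*(1/(cf*(n:ℝ))) with hC0def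
  have hC00 : 0 ≤ C0 := by
    have h1 : (0:ℝ) ≤ 1/(cf*(n:ℝ)) := by positivity
    have h2 : 0 ≤ l₁*Mv + l₂*Mu := by positivity
    positivity
  have hdiff : S - ∫ s in (x-h)..(x+h), g s
      = (∑ i ∈ Finset.range (N-1),
          (u (a i) * v (t' (1+i)) * (a (i+1) - a i) - ∫ s in (a i)..(a (i+1)), g s))
        - (∫ s in (x-h)..(T 1), g s) - (∫ s in (T N)..(x+h), g s) := by
    rw [Finset.sum_sub_distrib, hsum_int, hsplit, hS]; ring
  have hterm : ∀ i ∈ Finset.range (N-1),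
      |u (a i) * v (t' (1+i)) * (a (i+1) - a i) - ∫ s in (a i)..(a (i+1)), g s|
      ≤ C0 * (a (i+1) - a i) := by
    intro i hi
    rw [Finset.mem_range] at hi
    have hp1 : 1 ≤ 1+i := by omega
    have hp2 : (1+i)+1 ≤ N := by omega
    have hab : a i ≤ a (i+1) := hTle (1+i) (1+(i+1)) hp1 (by omega) (by omega)
    have hdle : a (i+1) - a i ≤ 1/(cf*(n:ℝ)) := hd (1+i) hp1 hp2
    have ht'mem : t' (1+i) ∈ Set.Icc (a i) (a (i+1)) := ht' (1+i) hp1 hp2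
    have haiW : a i ∈ W := hamem i (by omega)
    have hai1W : a (i+1) ∈ W := hamem (i+1) (by omega)
    have hIccW : Set.Icc (a i) (a (i+1)) ⊆ W :=
      fun s hs => ⟨le_trans haiW.1 hs.1, le_trans hs.2 hai1W.2⟩
    have hpos : (0:ℝ) ≤ 1/(cf*(n:ℝ)) := by positivity
    have hkey : ∀ s ∈ Set.Icc (a i) (a (i+1)),
        |u (a i) * v (t' (1+i)) - g s| ≤ C0 := by
      intro s hs
      have hsW : s ∈ W := hIccW hs
      have e1 : |u (a i) - u s| ≤ l₁ * (1/(cf*(n:ℝ))) := by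
        have h1 := hu (a i) haiW s hsW
        have h2 : |a i - s| ≤ 1/(cf*(n:ℝ)) := by
          rw [abs_le]
          constructor
          · linarith [hs.2]
          · linarith [hs.1]
        calc |u (a i) - u s| ≤ l₁ * |a i - s| := h1
        _ ≤ l₁ * (1/(cf*(n:ℝ))) := by nlinarith
      have e2 : |v (t' (1+i)) - v s| ≤ l₂ * (1/(cf*(n:ℝ))) := by
        have h1 := hv (t' (1+i)) (hIccW ht'mem) s hsW
        have h2 : |t' (1+i) - s| ≤ 1/(cf*(n:ℝ)) := by
          rw [abs_le]
          constructor
          · linarith [hs.2, ht'mem.1]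
          · linarith [hs.1, ht'mem.2]
        calc |v (t' (1+i)) - v s| ≤ l₂ * |t' (1+i) - s| := h1
        _ ≤ l₂ * (1/(cf*(n:ℝ))) := by nlinarith
      have heq : u (a i) * v (t' (1+i)) - g s
          = (u (a i) - u s) * v (t' (1+i)) + u s * (v (t' (1+i)) - v s) := by
        simp only [hgdef]; ring
      rw [heq]
      calc |(u (a i) - u s) * v (t' (1+i)) + u s * (v (t' (1+i)) - v s)|
          ≤ |(u (a i) - u s) * v (t' (1+i))| + |u s * (v (t' (1+i)) - v s)| := abs_add_le _ _
      _ = |u (a i) - u s| * |v (t' (1+i))| + |u s| * |v (t' (1+i)) - v s| := by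
          rw [abs_mul, abs_mul]
      _ ≤ (l₁ * (1/(cf*(n:ℝ)))) * Mv + Mu * (l₂ * (1/(cf*(n:ℝ)))) := by
          refine add_le_add (mul_le_mul e1 (hMv_le _ (hIccW ht'mem)) (abs_nonneg _) (by positivity))
            (mul_le_mul (hMu_le s hsW) e2 (abs_nonneg _) hMu0)
      _ = C0 := by rw [hC0def]; ring
    have hconst : u (a i) * v (t' (1+i)) * (a (i+1) - a i)
        = ∫ _ in (a i)..(a (i+1)), u (a i) * v (t' (1+i)) := by
      rw [intervalIntegral.integral_const, smul_eq_mul]; ring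
    rw [hconst, ← intervalIntegral.integral_sub (intervalIntegrable_const) (hgi _ haiW _ hai1W)]
    have hb : ∀ s ∈ Set.uIoc (a i) (a (i+1)),
        ‖u (a i) * v (t' (1+i)) - g s‖ ≤ C0 := by
      intro s hs
      rw [Set.uIoc_of_le hab] at hs
      rw [Real.norm_eq_abs]
      exact hkey s ⟨le_of_lt hs.1, hs.2⟩
    have hnb := intervalIntegral.norm_integral_le_of_norm_le_const hb
    rw [Real.norm_eq_abs] at hnb
    calc |∫ s in (a i)..(a (i+1)), (u (a i) * v (t' (1+i)) - g s)|
        ≤ C0 * |a (i+1) - a i| := hnb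
    _ = C0 * (a (i+1) - a i) := by rw [abs_of_nonneg (by linarith)]
  have hmid : (∑ i ∈ Finset.range (N-1),
      |u (a i) * v (t' (1+i)) * (a (i+1) - a i) - ∫ s in (a i)..(a (i+1)), g s|)
      ≤ C0 * (2*h) := by
    calc (∑ i ∈ Finset.range (N-1),
        |u (a i) * v (t' (1+i)) * (a (i+1) - a i) - ∫ s in (a i)..(a (i+1)), g s|)
        ≤ ∑ i ∈ Finset.range (N-1), C0 * (a (i+1) - a i) := Finset.sum_le_sum hterm
    _ = C0 * ∑ i ∈ Finset.range (N-1), (a (i+1) - a i) := by rw [Finset.mul_sum]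
    _ = C0 * (a (N-1) - a 0) := by rw [Finset.sum_range_sub]
    _ = C0 * (T N - T 1) := by rw [ha0, haN]
    _ ≤ C0 * (2*h) := by nlinarith [hL0, hR0]
  have hedge1 : |∫ s in (x-h)..(T 1), g s| ≤ Me * (1/(cf*(n:ℝ))) := by
    have hb : ∀ s ∈ Set.uIoc (x-h) (T 1), ‖g s‖ ≤ Me := by
      intro s hs
      rw [Set.uIoc_of_le hL0] at hs
      rw [Real.norm_eq_abs]
      exact hMe_le s (Or.inl ⟨le_of_lt hs.1, hs.2⟩)
    have hnb := intervalIntegral.norm_integral_le_of_norm_le_const hb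
    rw [Real.norm_eq_abs] at hnb
    calc |∫ s in (x-h)..(T 1), g s| ≤ Me * |T 1 - (x-h)| := hnb
    _ = Me * (T 1 - (x-h)) := by rw [abs_of_nonneg (by linarith)]
    _ ≤ Me * (1/(cf*(n:ℝ))) := by nlinarith
  have hedge2 : |∫ s in (T N)..(x+h), g s| ≤ Me * (1/(cf*(n:ℝ))) := by
    have hb : ∀ s ∈ Set.uIoc (T N) (x+h), ‖g s‖ ≤ Me := by
      intro s hs
      rw [Set.uIoc_of_le hR0] at hs
      rw [Real.norm_eq_abs]
      exact hMe_le s (Or.inr ⟨le_of_lt hs.1, hs.2⟩)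
    have hnb := intervalIntegral.norm_integral_le_of_norm_le_const hb
    rw [Real.norm_eq_abs] at hnb
    calc |∫ s in (T N)..(x+h), g s| ≤ Me * |x + h - T N| := hnb
    _ = Me * (x + h - T N) := by rw [abs_of_nonneg (by linarith)]
    _ ≤ Me * (1/(cf*(n:ℝ))) := by nlinarith
  have habs : |S - ∫ s in (x-h)..(x+h), g s|
      ≤ C0 * (2*h) + Me * (1/(cf*(n:ℝ))) + Me * (1/(cf*(n:ℝ))) := by
    rw [hdiff]
    have h1 := abs_sub (∑ i ∈ Finset.range (N-1),
        (u (a i) * v (t' (1+i)) * (a (i+1) - a i) - ∫ s in (a i)..(a (i+1)), g s))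
        (∫ s in (x-h)..(T 1), g s)
    have h2 := abs_sub ((∑ i ∈ Finset.range (N-1),
        (u (a i) * v (t' (1+i)) * (a (i+1) - a i) - ∫ s in (a i)..(a (i+1)), g s))
        - ∫ s in (x-h)..(T 1), g s)
        (∫ s in (T N)..(x+h), g s)
    have h3 := Finset.abs_sum_le_sum_abs
      (fun i => u (a i) * v (t' (1+i)) * (a (i+1) - a i) - ∫ s in (a i)..(a (i+1)), g s)
      (Finset.range (N-1))
    linarith
  have hfinal : C0 * (2*h) + Me * (1/(cf*(n:ℝ))) + Me * (1/(cf*(n:ℝ)))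
      = 2/cf * l₁ * (h/(n:ℝ)) * Mv + 2/cf * l₂ * (h/(n:ℝ)) * Mu + 2*(1/cf)/(n:ℝ) * Me := by
    rw [hC0def]
    field_simp
    ring
  linarith [habs]
end

section
/- Let α, w : [0,1] → [0,∞) be continuous with ∫_0^1 (α(s)w(s))^{1/3} ds > 0, and define f*(t) = (α(t)w(t))^{1/3} / ∫_0^1 (α(s)w(s))^{1/3} ds, a probability density on [0,1]. Then for every measurable probability density f > 0 on [0,1], ∫_0^1 (α(x)w(x)/f*(x)²) dx = (∫_0^1 (α w)^{1/3})³ ≤ ∫_0^1 (α(x)w(x)/f(x)²) dx; i.e. f* minimizes D(f) = ∫_0^1 α(x)w(x)f(x)^{−2} dx over all positive probability densities on [0,1]. -/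
open MeasureTheory
open scoped ENNReal

/- STATEMENT 12: Let α, w : [0,1] → [0,∞) be continuous with
   I = ∫₀¹ (αw)^{1/3} > 0 and f*(t) = (α(t)w(t))^{1/3} / I.  Then f* is a
   probability density on [0,1], ∫₀¹ αw/f*² = I³, and for every measurable
   positive probability density f on [0,1], I³ ≤ ∫₀¹ αw/f²  (the latter
   integral taken in the Lebesgue sense so as to cover the non-integrable
   case); i.e. f* minimizes D(f) = ∫₀¹ αw f⁻² over positive densities. -/

theorem optimal_design_minimizes_IMSE_factor
    (α w : ℝ → ℝ)
    (hα_cont : ContinuousOn α (Set.Icc 0 1))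
    (hα_nonneg : ∀ s ∈ Set.Icc (0:ℝ) 1, 0 ≤ α s)
    (hw_cont : ContinuousOn w (Set.Icc 0 1))
    (hw_nonneg : ∀ s ∈ Set.Icc (0:ℝ) 1, 0 ≤ w s)
    (I : ℝ) (hI : I = ∫ s in Set.Icc (0:ℝ) 1, (α s * w s) ^ ((1:ℝ)/3))
    (hI_pos : 0 < I)
    (fstar : ℝ → ℝ) (hfstar : ∀ u, fstar u = (α u * w u) ^ ((1:ℝ)/3) / I) :
    (∫ x in Set.Icc (0:ℝ) 1, fstar x) = 1 ∧
    (∫ x in Set.Icc (0:ℝ) 1, α x * w x / (fstar x) ^ 2) = I ^ 3 ∧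
    ∀ f : ℝ → ℝ, Measurable f →
      (∀ x ∈ Set.Icc (0:ℝ) 1, 0 < f x) →
      IntegrableOn f (Set.Icc (0:ℝ) 1) →
      (∫ x in Set.Icc (0:ℝ) 1, f x) = 1 →
      ENNReal.ofReal (I ^ 3)
        ≤ ∫⁻ x in Set.Icc (0:ℝ) 1, ENNReal.ofReal (α x * w x / (f x) ^ 2) := by

  set g : ℝ → ℝ := fun x => (α x * w x) ^ ((1:ℝ)/3) with hg
  have hg_cont : ContinuousOn g (Set.Icc 0 1) := by
    apply ContinuousOn.rpow_const (hα_cont.mul hw_cont)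
    intro x hx; right; norm_num
  have hg_nonneg : ∀ x ∈ Set.Icc (0:ℝ) 1, 0 ≤ g x := fun x hx =>
    Real.rpow_nonneg (mul_nonneg (hα_nonneg x hx) (hw_nonneg x hx)) _
  have hg_int : IntegrableOn g (Set.Icc 0 1) :=
    hg_cont.integrableOn_compact isCompact_Icc
  have hIg : (∫ x in Set.Icc (0:ℝ) 1, g x) = I := hI.symm
  have h1 : (∫ x in Set.Icc (0:ℝ) 1, fstar x) = 1 := by
    have heq : ∀ x, fstar x = g x / I := hfstar
    calc (∫ x in Set.Icc (0:ℝ) 1, fstar x)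
        = ∫ x in Set.Icc (0:ℝ) 1, g x / I := by simp_rw [heq]
      _ = (∫ x in Set.Icc (0:ℝ) 1, g x) / I := integral_div _ _
      _ = 1 := by rw [hIg, div_self hI_pos.ne']
  refine ⟨h1, ?_, ?_⟩
  · -- value at fstar
    have hpt : ∀ x ∈ Set.Icc (0:ℝ) 1, α x * w x / (fstar x) ^ 2 = I ^ 2 * g x := by
      intro x hx
      have ha : 0 ≤ α x * w x := mul_nonneg (hα_nonneg x hx) (hw_nonneg x hx)
      rcases eq_or_lt_of_le ha with h0 | h0
      · have hgx : g x = 0 := by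
          simp only [hg, ← h0]
          rw [Real.zero_rpow (by norm_num)]
        rw [hfstar, ← h0, hgx]
        simp
      · set a := α x * w x with hadef
        have hg23 : ((α x * w x) ^ ((1:ℝ)/3)) ^ 2 = a ^ ((2:ℝ)/3) := by
          rw [← hadef, ← Real.rpow_natCast (a ^ ((1:ℝ)/3)) 2, ← Real.rpow_mul h0.le]
          norm_num
        have hdiv : a ^ (1:ℝ) / a ^ ((2:ℝ)/3) = a ^ ((1:ℝ)/3) := by
          rw [← Real.rpow_sub h0]; norm_num
        have h23pos : (0:ℝ) < a ^ ((2:ℝ)/3) := Real.rpow_pos_of_pos h0 _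
        rw [hfstar, div_pow, hg23]
        show a / (a ^ ((2:ℝ)/3) / I ^ 2) = I ^ 2 * a ^ ((1:ℝ)/3)
        rw [div_div_eq_mul_div, ← hdiv, Real.rpow_one]
        ring
    rw [setIntegral_congr_fun measurableSet_Icc hpt, integral_const_mul, hIg]
    ring
  · -- minimality
    intro f hf_meas hf_pos hf_int hf_one
    set μ := volume.restrict (Set.Icc (0:ℝ) 1) with hμ
    set A : ℝ → ℝ≥0∞ := fun x => ENNReal.ofReal (α x * w x / (f x) ^ 2) with hA
    set B : ℝ → ℝ≥0∞ := fun x => ENNReal.ofReal (f x) with hB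
    have hαw_meas : AEMeasurable (fun x => α x * w x) μ :=
      (hα_cont.mul hw_cont).aemeasurable measurableSet_Icc
    have hA_meas : AEMeasurable A μ :=
      ENNReal.measurable_ofReal.comp_aemeasurable
        (hαw_meas.div ((hf_meas.pow_const 2).aemeasurable))
    have hB_meas : AEMeasurable B μ := (ENNReal.measurable_ofReal.comp hf_meas).aemeasurable
    -- pointwise identity on Icc
    have hae : ∀ᵐ x ∂μ, ENNReal.ofReal (g x) = A x ^ ((1:ℝ)/3) * B x ^ ((2:ℝ)/3) := by
      filter_upwards [ae_restrict_mem measurableSet_Icc] with x hx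
      have ha : 0 ≤ α x * w x := mul_nonneg (hα_nonneg x hx) (hw_nonneg x hx)
      have hb : 0 < f x := hf_pos x hx
      have hb23 : (f x ^ 2 : ℝ) ^ ((1:ℝ)/3) = f x ^ ((2:ℝ)/3) := by
        rw [← Real.rpow_natCast (f x) 2, ← Real.rpow_mul hb.le]
        norm_num
      have hreal : (α x * w x / (f x) ^ 2) ^ ((1:ℝ)/3) * (f x) ^ ((2:ℝ)/3) = g x := by
        rw [Real.div_rpow ha (sq_nonneg (f x)), hb23,
          div_mul_cancel₀ _ (Real.rpow_pos_of_pos hb _).ne']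
      show ENNReal.ofReal (g x) = ENNReal.ofReal (α x * w x / (f x) ^ 2) ^ ((1:ℝ)/3)
          * ENNReal.ofReal (f x) ^ ((2:ℝ)/3)
      rw [ENNReal.ofReal_rpow_of_nonneg (div_nonneg ha (sq_nonneg (f x)))
          (by norm_num : (0:ℝ) ≤ 1/3),
        ENNReal.ofReal_rpow_of_nonneg hb.le (by norm_num : (0:ℝ) ≤ 2/3),
        ← ENNReal.ofReal_mul (Real.rpow_nonneg (div_nonneg ha (sq_nonneg (f x))) _), hreal]
    have hIof : ENNReal.ofReal I = ∫⁻ x, ENNReal.ofReal (g x) ∂μ := by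
      rw [← hIg]
      exact ofReal_integral_eq_lintegral_ofReal hg_int
        ((ae_restrict_mem measurableSet_Icc).mono fun x hx => hg_nonneg x hx)
    have hBint : (∫⁻ x, B x ∂μ) = 1 := by
      rw [hB, ← ofReal_integral_eq_lintegral_ofReal hf_int
        ((ae_restrict_mem measurableSet_Icc).mono fun x hx => (hf_pos x hx).le), hf_one,
        ENNReal.ofReal_one]
    have hpq : Real.HolderConjugate 3 (3/2) := by
      constructor <;> norm_num
    have hholder := ENNReal.lintegral_mul_le_Lp_mul_Lq μ hpq
      (hA_meas.pow_const ((1:ℝ)/3)) (hB_meas.pow_const ((2:ℝ)/3))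
    have hsimpA : ∀ x, (A x ^ ((1:ℝ)/3)) ^ (3:ℝ) = A x := by
      intro x; rw [← ENNReal.rpow_mul]; norm_num
    have hsimpB : ∀ x, (B x ^ ((2:ℝ)/3)) ^ ((3:ℝ)/2) = B x := by
      intro x; rw [← ENNReal.rpow_mul]; norm_num
    have hmain : ENNReal.ofReal I ≤ (∫⁻ x, A x ∂μ) ^ ((1:ℝ)/3) := by
      calc ENNReal.ofReal I = ∫⁻ x, ENNReal.ofReal (g x) ∂μ := hIof
        _ = ∫⁻ x, ((fun y => A y ^ ((1:ℝ)/3)) * fun y => B y ^ ((2:ℝ)/3)) x ∂μ :=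
            lintegral_congr_ae hae
        _ ≤ (∫⁻ x, (A x ^ ((1:ℝ)/3)) ^ (3:ℝ) ∂μ) ^ (1/(3:ℝ)) *
            (∫⁻ x, (B x ^ ((2:ℝ)/3)) ^ ((3:ℝ)/2) ∂μ) ^ (1/((3:ℝ)/2)) := hholder
        _ = (∫⁻ x, A x ∂μ) ^ ((1:ℝ)/3) * (∫⁻ x, B x ∂μ) ^ ((2:ℝ)/3) := by
            simp_rw [hsimpA, hsimpB]; norm_num
        _ = (∫⁻ x, A x ∂μ) ^ ((1:ℝ)/3) := by rw [hBint, ENNReal.one_rpow, mul_one]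
    have hfinal : ENNReal.ofReal I ^ (3:ℝ) ≤ ∫⁻ x, A x ∂μ := by
      calc ENNReal.ofReal I ^ (3:ℝ)
          ≤ ((∫⁻ x, A x ∂μ) ^ ((1:ℝ)/3)) ^ (3:ℝ) :=
            ENNReal.rpow_le_rpow hmain (by norm_num)
        _ = ∫⁻ x, A x ∂μ := by rw [← ENNReal.rpow_mul]; norm_num
    calc ENNReal.ofReal (I ^ 3) = ENNReal.ofReal I ^ (3:ℕ) :=
          (ENNReal.ofReal_pow hI_pos.le 3)
      _ = ENNReal.ofReal I ^ (3:ℝ) := by rw [← ENNReal.rpow_natCast]; norm_num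
      _ ≤ ∫⁻ x, A x ∂μ := hfinal
end

section
/- Fix ε₁, ε₂ > 0 and let Λ̄ be the set of pairs (α, w) of continuous nonnegative functions on [0,1] with ∫_0^1 α ≤ ε₁ and (∫_0^1 √w)² ≤ ε₂, and Ψ_{(α,w)}(f) = ∫_0^1 α(t)w(t)/f(t)² dt. Then: (i) for every (α, w) ∈ Λ̄ with ∫_0^1 (αw)^{1/3} > 0, the density f*_{(α,w)}(t) = (α(t)w(t))^{1/3}/∫_0^1 (αw)^{1/3} satisfies Ψ_{(α,w)}(f*_{(α,w)}) ≤ ε₁ε₂; and (ii) for every measurable positive probability density f on [0,1], taking the constant pair α* ≡ ε₁, w* ≡ ε₂ (which lies in Λ̄) gives Ψ_{(α*,w*)}(f) = ε₁ε₂ ∫_0^1 f(s)^{−2} ds ≥ ε₁ε₂. Hence f* is optimal with respect to the minimax criterion min_f max_{(α,w)} Ψ_{(α,w)}(f). -/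
open MeasureTheory
open scoped ENNReal

private lemma memLp_of_continuousOn {u : ℝ → ℝ} (hu : ContinuousOn u (Set.Icc 0 1))
    (p : ℝ≥0∞) : MemLp u p (volume.restrict (Set.Icc (0:ℝ) 1)) := by
  have hIcc : MeasurableSet (Set.Icc (0:ℝ) 1) := measurableSet_Icc
  have hfin : IsFiniteMeasure (volume.restrict (Set.Icc (0:ℝ) 1)) := by
    constructor
    rw [Measure.restrict_apply_univ, Real.volume_Icc]
    exact ENNReal.ofReal_lt_top
  obtain ⟨C, hC⟩ := isCompact_Icc.exists_bound_of_continuousOn hu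
  exact MemLp.of_bound (hu.aestronglyMeasurable hIcc) C
    ((ae_restrict_mem hIcc).mono fun x hx => hC x hx)

theorem minimax_optimality_of_fstar
    (ε₁ ε₂ : ℝ) (hε₁ : 0 < ε₁) (hε₂ : 0 < ε₂) :
    (∀ α w : ℝ → ℝ,
      ContinuousOn α (Set.Icc 0 1) → (∀ s ∈ Set.Icc (0:ℝ) 1, 0 ≤ α s) →
      ContinuousOn w (Set.Icc 0 1) → (∀ s ∈ Set.Icc (0:ℝ) 1, 0 ≤ w s) →
      (∫ s in Set.Icc (0:ℝ) 1, α s) ≤ ε₁ →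
      (∫ s in Set.Icc (0:ℝ) 1, Real.sqrt (w s)) ^ 2 ≤ ε₂ →
      0 < (∫ s in Set.Icc (0:ℝ) 1, (α s * w s) ^ ((1:ℝ)/3)) →
      (∫ x in Set.Icc (0:ℝ) 1,
          α x * w x /
            ((α x * w x) ^ ((1:ℝ)/3)
              / (∫ s in Set.Icc (0:ℝ) 1, (α s * w s) ^ ((1:ℝ)/3))) ^ 2)
        ≤ ε₁ * ε₂) ∧
    ((∀ s ∈ Set.Icc (0:ℝ) 1, (0:ℝ) ≤ ε₁) ∧
      (∫ s in Set.Icc (0:ℝ) 1, (ε₁ : ℝ)) ≤ ε₁ ∧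
      (∫ s in Set.Icc (0:ℝ) 1, Real.sqrt (ε₂ : ℝ)) ^ 2 ≤ ε₂ ∧
      ∀ f : ℝ → ℝ, Measurable f →
        (∀ x ∈ Set.Icc (0:ℝ) 1, 0 < f x) →
        IntegrableOn f (Set.Icc (0:ℝ) 1) →
        (∫ x in Set.Icc (0:ℝ) 1, f x) = 1 →
        (∫⁻ x in Set.Icc (0:ℝ) 1, ENNReal.ofReal (ε₁ * ε₂ / (f x) ^ 2))
          = ENNReal.ofReal (ε₁ * ε₂)
              * ∫⁻ x in Set.Icc (0:ℝ) 1, ENNReal.ofReal (1 / (f x) ^ 2) ∧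
        ENNReal.ofReal (ε₁ * ε₂)
          ≤ ∫⁻ x in Set.Icc (0:ℝ) 1, ENNReal.ofReal (ε₁ * ε₂ / (f x) ^ 2)) := by
  have hIcc : MeasurableSet (Set.Icc (0:ℝ) 1) := measurableSet_Icc
  have hvol : volume (Set.Icc (0:ℝ) 1) = 1 := by
    rw [Real.volume_Icc]; norm_num
  constructor
  · -- Part (i)
    intro α w hαc hα0 hwc hw0 hαint hwint hIpos
    set I := ∫ s in Set.Icc (0:ℝ) 1, (α s * w s) ^ ((1:ℝ)/3) with hIdef
    have hIne : I ≠ 0 := ne_of_gt hIpos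
    set A := ∫ s in Set.Icc (0:ℝ) 1, α s with hAdef
    set B := ∫ s in Set.Icc (0:ℝ) 1, Real.sqrt (w s) with hBdef
    have hA : (0:ℝ) ≤ A := setIntegral_nonneg hIcc hα0
    have hB : (0:ℝ) ≤ B := setIntegral_nonneg hIcc fun x _ => Real.sqrt_nonneg _
    -- pointwise identity of the integrand
    have hpt : Set.EqOn
        (fun x => α x * w x / ((α x * w x) ^ ((1:ℝ)/3) / I) ^ 2)
        (fun x => I ^ 2 * (α x * w x) ^ ((1:ℝ)/3)) (Set.Icc 0 1) := by
      intro x hx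
      have ha : 0 ≤ α x * w x := mul_nonneg (hα0 x hx) (hw0 x hx)
      rcases ha.eq_or_lt with h | h
      · simp only [← h, Real.zero_rpow (by norm_num : (1:ℝ)/3 ≠ 0)]
        simp
      · have h3 : (0:ℝ) < (α x * w x) ^ ((1:ℝ)/3) := Real.rpow_pos_of_pos h _
        have key : α x * w x
            = (α x * w x) ^ ((1:ℝ)/3) * ((α x * w x) ^ ((1:ℝ)/3)) ^ 2 := by
          rw [← Real.rpow_natCast ((α x * w x) ^ ((1:ℝ)/3)) 2,
            ← Real.rpow_mul h.le, ← Real.rpow_add h]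
          norm_num
        simp only
        rw [div_pow, div_div_eq_mul_div, div_eq_iff (by positivity)]
        nth_rewrite 1 [key]
        ring
    -- the integral equals I^3
    have h1 : (∫ x in Set.Icc (0:ℝ) 1,
        α x * w x / ((α x * w x) ^ ((1:ℝ)/3) / I) ^ 2) = I ^ 2 * I := by
      rw [setIntegral_congr_fun hIcc hpt, integral_const_mul]
    -- Hölder's inequality
    have hq : Real.HolderConjugate 3 (3/2) := ⟨by norm_num, by norm_num, by norm_num⟩
    have hcont3 : Continuous fun y : ℝ => y ^ ((1:ℝ)/3) := by
      rw [continuous_iff_continuousAt]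
      intro y
      exact Real.continuousAt_rpow_const y _ (Or.inr (by norm_num))
    have hαc3 : ContinuousOn (fun x => α x ^ ((1:ℝ)/3)) (Set.Icc 0 1) :=
      hcont3.comp_continuousOn hαc
    have hwc3 : ContinuousOn (fun x => w x ^ ((1:ℝ)/3)) (Set.Icc 0 1) :=
      hcont3.comp_continuousOn hwc
    have hH := integral_mul_le_Lp_mul_Lq_of_nonneg (μ := volume.restrict (Set.Icc (0:ℝ) 1)) hq
      (f := fun x => α x ^ ((1:ℝ)/3)) (g := fun x => w x ^ ((1:ℝ)/3))
      ((ae_restrict_mem hIcc).mono fun x hx => Real.rpow_nonneg (hα0 x hx) _)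
      ((ae_restrict_mem hIcc).mono fun x hx => Real.rpow_nonneg (hw0 x hx) _)
      (memLp_of_continuousOn hαc3 _) (memLp_of_continuousOn hwc3 _)
    have e1 : (∫ x in Set.Icc (0:ℝ) 1, α x ^ ((1:ℝ)/3) * w x ^ ((1:ℝ)/3)) = I := by
      rw [hIdef]
      refine setIntegral_congr_fun hIcc fun x hx => ?_
      exact (Real.mul_rpow (hα0 x hx) (hw0 x hx)).symm
    have e2 : (∫ x in Set.Icc (0:ℝ) 1, (α x ^ ((1:ℝ)/3)) ^ (3:ℝ)) = A := by
      rw [hAdef]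
      refine setIntegral_congr_fun hIcc fun x hx => ?_
      rw [← Real.rpow_mul (hα0 x hx)]
      norm_num
    have e3 : (∫ x in Set.Icc (0:ℝ) 1, (w x ^ ((1:ℝ)/3)) ^ ((3:ℝ)/2)) = B := by
      rw [hBdef]
      refine setIntegral_congr_fun hIcc fun x hx => ?_
      rw [← Real.rpow_mul (hw0 x hx), Real.sqrt_eq_rpow]
      norm_num
    rw [e1, e2, e3] at hH
    have hH' : I ≤ A ^ ((1:ℝ)/3) * B ^ ((2:ℝ)/3) := by
      convert hH using 3
      norm_num
    have hcube : (A ^ ((1:ℝ)/3) * B ^ ((2:ℝ)/3)) ^ 3 = A * B ^ 2 := by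
      rw [mul_pow, ← Real.rpow_natCast (A ^ ((1:ℝ)/3)) 3,
        ← Real.rpow_natCast (B ^ ((2:ℝ)/3)) 3,
        ← Real.rpow_mul hA, ← Real.rpow_mul hB]
      norm_num
    calc (∫ x in Set.Icc (0:ℝ) 1,
        α x * w x / ((α x * w x) ^ ((1:ℝ)/3) / I) ^ 2) = I ^ 2 * I := h1
      _ = I ^ 3 := by ring
      _ ≤ (A ^ ((1:ℝ)/3) * B ^ ((2:ℝ)/3)) ^ 3 := by
          exact pow_le_pow_left₀ hIpos.le hH' 3
      _ = A * B ^ 2 := hcube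
      _ ≤ ε₁ * ε₂ := mul_le_mul hαint hwint (sq_nonneg _) hε₁.le
  · -- Part (ii)
    refine ⟨fun s _ => hε₁.le, ?_, ?_, ?_⟩
    · rw [setIntegral_const, measureReal_def, hvol]; simp
    · rw [setIntegral_const, measureReal_def, hvol]
      simp [Real.sq_sqrt hε₂.le]
    · intro f hf hfpos hfint hfone
      have hmeas : Measurable fun x => ENNReal.ofReal (1 / f x ^ 2) :=
        (measurable_const.div ((hf.pow_const 2))).ennreal_ofReal
      have heq : (∫⁻ x in Set.Icc (0:ℝ) 1, ENNReal.ofReal (ε₁ * ε₂ / (f x) ^ 2))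
          = ENNReal.ofReal (ε₁ * ε₂)
              * ∫⁻ x in Set.Icc (0:ℝ) 1, ENNReal.ofReal (1 / (f x) ^ 2) := by
        rw [← lintegral_const_mul _ hmeas]
        refine lintegral_congr fun x => ?_
        rw [← ENNReal.ofReal_mul (by positivity), mul_one_div]
      refine ⟨heq, ?_⟩
      -- lower bound : 1 ≤ ∫⁻ 1/f²
      have hT : 1 ≤ ∫⁻ x in Set.Icc (0:ℝ) 1, ENNReal.ofReal (1 / f x ^ 2) := by
        set μ := volume.restrict (Set.Icc (0:ℝ) 1) with hμ
        have hq : Real.HolderConjugate (3/2) 3 := ⟨by norm_num, by norm_num, by norm_num⟩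
        set F := fun x => (ENNReal.ofReal (f x)) ^ ((2:ℝ)/3) with hF
        set G := fun x => (ENNReal.ofReal (1 / f x ^ 2)) ^ ((1:ℝ)/3) with hG
        have hFm : AEMeasurable F μ :=
          (hf.ennreal_ofReal.pow_const _).aemeasurable
        have hGm : AEMeasurable G μ := (hmeas.pow_const _).aemeasurable
        have hH := ENNReal.lintegral_mul_le_Lp_mul_Lq μ hq hFm hGm
        -- F * G = 1 on Icc
        have hfg : (∫⁻ x, (F * G) x ∂μ) = 1 := by
          have : (∫⁻ x, (F * G) x ∂μ) = ∫⁻ _x, 1 ∂μ := by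
            refine lintegral_congr_ae (((ae_restrict_mem hIcc)).mono fun x hx => ?_)
            have hfx := hfpos x hx
            have ha0 : ENNReal.ofReal (f x) ≠ 0 := by
              simp [ENNReal.ofReal_eq_zero]; linarith
            have hat : ENNReal.ofReal (f x) ≠ ⊤ := ENNReal.ofReal_ne_top
            have hr : 1 / f x ^ 2 = f x ^ (-(2:ℝ)) := by
              rw [Real.rpow_neg hfx.le, ← Real.rpow_natCast (f x) 2]
              norm_num
            have hinv : ENNReal.ofReal (1 / f x ^ 2)
                = (ENNReal.ofReal (f x)) ^ (-(2:ℝ)) := by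
              rw [hr, ENNReal.ofReal_rpow_of_pos hfx]
            simp only [Pi.mul_apply, hF, hG, hinv]
            rw [← ENNReal.rpow_mul, ← ENNReal.rpow_add _ _ ha0 hat]
            norm_num
          rw [this, lintegral_one, hμ, Measure.restrict_apply_univ, hvol]
        -- ∫⁻ F^(3/2) = 1
        have hf1 : (∫⁻ x, F x ^ ((3:ℝ)/2) ∂μ) = 1 := by
          have : (∫⁻ x, F x ^ ((3:ℝ)/2) ∂μ) = ∫⁻ x, ENNReal.ofReal (f x) ∂μ := by
            refine lintegral_congr fun x => ?_
            rw [hF]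
            rw [← ENNReal.rpow_mul]
            norm_num
          rw [this, ← ofReal_integral_eq_lintegral_ofReal hfint
            (((ae_restrict_mem hIcc)).mono fun x hx => (hfpos x hx).le), hfone,
            ENNReal.ofReal_one]
        have hg1 : (∫⁻ x, G x ^ (3:ℝ) ∂μ)
            = ∫⁻ x, ENNReal.ofReal (1 / f x ^ 2) ∂μ := by
          refine lintegral_congr fun x => ?_
          rw [hG, ← ENNReal.rpow_mul]
          norm_num
        rw [hfg, hf1, hg1, ENNReal.one_rpow, one_mul] at hH
        have h3 := ENNReal.rpow_le_rpow hH (by norm_num : (0:ℝ) ≤ 3)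
        rw [ENNReal.one_rpow, ← ENNReal.rpow_mul] at h3
        norm_num [ENNReal.rpow_one] at h3
        simpa [one_div] using h3
      calc ENNReal.ofReal (ε₁ * ε₂) = ENNReal.ofReal (ε₁ * ε₂) * 1 := (mul_one _).symm
        _ ≤ ENNReal.ofReal (ε₁ * ε₂)
            * ∫⁻ x in Set.Icc (0:ℝ) 1, ENNReal.ofReal (1 / f x ^ 2) :=
          mul_le_mul_right hT _
        _ = _ := heq.symm
end

section
/- Suppose R : [0,1]² → ℝ is a continuous symmetric covariance function satisfying assumptions (A)–(C) (continuous diagonal jump function α, bounded continuous off-diagonal mixed partials up to order 2), f is a Lipschitz-continuous positive density generating the regular design, K is an even kernel supported in [−1,1], C² with K'' Lipschitz and ∫K = 1, and x ∈ (0,1). For bandwidths h = h_n with h_n → 0 and n h_n → ∞, define S_n(x) = (1/(4n²)) Σ_{i=1}^{N−1} Σ_{k=1}^{N−1} (φ_{x,h}/f)(t_{x,i}) (φ_{x,h}/f)(t_{x,k}) [R(t_{x,i},t_{x,k}) − R(t_{x,i},x) − R(x,t_{x,k}) + R(x,x)]. Then lim_{n→∞} S_n(x) = 0. (S_n(x)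 equals E[A_{m,n}(x)²] where A_{m,n}(x) = m^{−1/2} Σ_{j=1}^m (1/(2n)) Σ_{i=1}^{N−1} (φ_{x,h}/f)(t_{x,i})(ε_j(t_{x,i}) − ε_j(x)) in the repeated-measurements model.) -/
open MeasureTheory Filter
open scoped Classical Topology

/-- The scaled kernel φ_{x,h}(s) = (1/h) K((x−s)/h). -/
noncomputable def phiK (K : ℝ → ℝ) (x h s : ℝ) : ℝ := (1 / h) * K ((x - s) / h)

/-- Indices i (= 1, …, N−1) of consecutive pairs of design points both lying
    in the window [x−h, x+h]. -/
noncomputable def trapIdx (t : ℕ → ℕ → ℝ) (n : ℕ) (x h : ℝ) : Finset ℕ :=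
  (Finset.Icc 1 (n - 1)).filter
    (fun i => t n i ∈ Set.Icc (x - h) (x + h) ∧ t n (i + 1) ∈ Set.Icc (x - h) (x + h))

/- STATEMENT 17: Under assumptions (A)–(C) on the covariance R, with f a
   Lipschitz positive density generating the regular design and K an even C²
   kernel supported in [−1,1] with K'' Lipschitz and ∫K = 1, x ∈ (0,1), and
   bandwidths h_n → 0 with n·h_n → ∞, the quantity
   S_n(x) = (1/(4n²)) Σ_{i=1}^{N−1} Σ_{k=1}^{N−1} (φ/f)(t_{x,i}) (φ/f)(t_{x,k})
              [R(t_{x,i},t_{x,k}) − R(t_{x,i},x) − R(x,t_{x,k}) + R(x,x)]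
   tends to 0 as n → ∞. -/



/-- One-interval mean value bound: continuous on `[a,b]`, derivative bounded by `A`
    on the open interval. -/
lemma absSub_le_of_derivBound (g g' : ℝ → ℝ) (A a b : ℝ) (hab : a ≤ b)
    (hg : ContinuousOn g (Set.Icc a b))
    (hd : ∀ s ∈ Set.Ioo a b, HasDerivAt g (g' s) s)
    (hb : ∀ s ∈ Set.Ioo a b, |g' s| ≤ A) :
    |g b - g a| ≤ A * (b - a) := by
  have hId : ∀ s : ℝ, HasDerivAt (fun y : ℝ => A * y) A s := by
    intro s; simpa using (hasDerivAt_id s).const_mul A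
  have hF : MonotoneOn (fun s => A * s - g s) (Set.Icc a b) := by
    apply monotoneOn_of_hasDerivWithinAt_nonneg (f' := fun s => A - g' s) (convex_Icc a b)
      (((continuous_const.mul continuous_id).continuousOn).sub hg)
    · intro s hs
      rw [interior_Icc] at hs
      exact ((hId s).sub (hd s hs)).hasDerivWithinAt
    · intro s hs
      rw [interior_Icc] at hs
      have := abs_le.1 (hb s hs)
      linarith [this.2]
  have hG : MonotoneOn (fun s => A * s + g s) (Set.Icc a b) := by
    apply monotoneOn_of_hasDerivWithinAt_nonneg (f' := fun s => A + g' s) (convex_Icc a b)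
      (((continuous_const.mul continuous_id).continuousOn).add hg)
    · intro s hs
      rw [interior_Icc] at hs
      exact ((hId s).add (hd s hs)).hasDerivWithinAt
    · intro s hs
      rw [interior_Icc] at hs
      have := abs_le.1 (hb s hs)
      linarith [this.1]
  have h1 := hF (Set.left_mem_Icc.2 hab) (Set.right_mem_Icc.2 hab) hab
  have h2 := hG (Set.left_mem_Icc.2 hab) (Set.right_mem_Icc.2 hab) hab
  simp only at h1 h2
  rw [abs_le]
  constructor <;> linarith

/-- Lipschitz bound on `[0,1]` from a derivative bound with one exceptional point. -/
lemma lip_of_derivBound_except (g g' : ℝ → ℝ) (A u : ℝ)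
    (hg : ContinuousOn g (Set.Icc 0 1))
    (hd : ∀ s ∈ Set.Icc (0:ℝ) 1, s ≠ u → HasDerivAt g (g' s) s)
    (hb : ∀ s ∈ Set.Icc (0:ℝ) 1, s ≠ u → |g' s| ≤ A) :
    ∀ v ∈ Set.Icc (0:ℝ) 1, ∀ w ∈ Set.Icc (0:ℝ) 1, |g v - g w| ≤ A * |v - w| := by
  have key : ∀ v ∈ Set.Icc (0:ℝ) 1, ∀ w ∈ Set.Icc (0:ℝ) 1, v ≤ w →
      |g w - g v| ≤ A * (w - v) := by
    intro v hv w hw hvw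
    have hsub : Set.Icc v w ⊆ Set.Icc (0:ℝ) 1 := Set.Icc_subset_Icc hv.1 hw.2
    by_cases hu : u ∈ Set.Ioo v w
    · have hvu : v ≤ u := le_of_lt hu.1
      have huw : u ≤ w := le_of_lt hu.2
      have hsub1 : Set.Icc v u ⊆ Set.Icc (0:ℝ) 1 :=
        Set.Icc_subset_Icc hv.1 (le_trans huw hw.2)
      have hsub2 : Set.Icc u w ⊆ Set.Icc (0:ℝ) 1 :=
        Set.Icc_subset_Icc (le_trans hv.1 hvu) hw.2
      have h1 : |g u - g v| ≤ A * (u - v) := by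
        apply absSub_le_of_derivBound g g' A v u hvu (hg.mono hsub1)
        · intro s hs
          exact hd s (hsub1 (Set.Ioo_subset_Icc_self hs)) (ne_of_lt hs.2)
        · intro s hs
          exact hb s (hsub1 (Set.Ioo_subset_Icc_self hs)) (ne_of_lt hs.2)
      have h2 : |g w - g u| ≤ A * (w - u) := by
        apply absSub_le_of_derivBound g g' A u w huw (hg.mono hsub2)
        · intro s hs
          exact hd s (hsub2 (Set.Ioo_subset_Icc_self hs)) (ne_of_gt hs.1)
        · intro s hs
          exact hb s (hsub2 (Set.Ioo_subset_Icc_self hs)) (ne_of_gt hs.1)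
      have heq : g w - g v = (g w - g u) + (g u - g v) := by ring
      rw [heq]
      calc |(g w - g u) + (g u - g v)| ≤ |g w - g u| + |g u - g v| := abs_add_le _ _
        _ ≤ A * (w - u) + A * (u - v) := add_le_add h2 h1
        _ = A * (w - v) := by ring
    · apply absSub_le_of_derivBound g g' A v w hvw (hg.mono hsub)
      · intro s hs
        have : s ≠ u := fun hsu => hu (hsu ▸ hs)
        exact hd s (hsub (Set.Ioo_subset_Icc_self hs)) this
      · intro s hs
        have : s ≠ u := fun hsu => hu (hsu ▸ hs)
        exact hb s (hsub (Set.Ioo_subset_Icc_self hs)) this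
  intro v hv w hw
  rcases le_total v w with hvw | hwv
  · calc |g v - g w| = |g w - g v| := abs_sub_comm _ _
      _ ≤ A * (w - v) := key v hv w hw hvw
      _ = A * |v - w| := by
          rw [abs_sub_comm, abs_of_nonneg (by linarith : (0:ℝ) ≤ w - v)]
  · calc |g v - g w| ≤ A * (v - w) := key w hw v hv hwv
      _ = A * |v - w| := by rw [abs_of_nonneg (by linarith : (0:ℝ) ≤ v - w)]

lemma trapIdx_card_le
    (f : ℝ → ℝ) (Mf : ℝ) (hMf0 : 0 ≤ Mf)
    (hf_cont : ContinuousOn f (Set.Icc 0 1))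
    (hMf : ∀ s ∈ Set.Icc (0:ℝ) 1, f s ≤ Mf)
    (t : ℕ → ℕ → ℝ)
    (ht_mem : ∀ n i : ℕ, 1 ≤ i → i ≤ n → t n i ∈ Set.Icc (0:ℝ) 1)
    (ht_def : ∀ n i : ℕ, 1 ≤ i → i ≤ n →
      ∫ s in (0:ℝ)..(t n i), f s = (i : ℝ) / n)
    (ht_mono : ∀ n : ℕ, StrictMonoOn (t n) (Set.Icc 1 n))
    (x : ℝ) (n : ℕ) (hn : 1 ≤ n) (h : ℝ) (hh : 0 < h) :
    ((trapIdx t n x h).card : ℝ) ≤ 2 * Mf * n * h + 1 := by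
  have hn0 : (0:ℝ) < n := by exact_mod_cast hn
  set S := trapIdx t n x h with hS
  rcases S.eq_empty_or_nonempty with hSe | hSne
  · rw [hSe]
    simp only [Finset.card_empty, Nat.cast_zero]
    nlinarith [mul_pos hn0 hh]
  · set m := S.min' hSne with hm
    set M := S.max' hSne with hM
    have hmem : ∀ i ∈ S, (1 ≤ i ∧ i ≤ n) ∧ t n i ∈ Set.Icc (x - h) (x + h) := by
      intro i hi
      rw [hS, trapIdx, Finset.mem_filter, Finset.mem_Icc] at hi
      exact ⟨⟨hi.1.1, le_trans hi.1.2 (Nat.sub_le n 1)⟩, hi.2.1⟩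
    have hmm := hmem m (S.min'_mem hSne)
    have hMM := hmem M (S.max'_mem hSne)
    have hmM : m ≤ M := S.min'_le M (S.max'_mem hSne)
    have htm : t n m ∈ Set.Icc (0:ℝ) 1 := ht_mem n m hmm.1.1 hmm.1.2
    have htM : t n M ∈ Set.Icc (0:ℝ) 1 := ht_mem n M hMM.1.1 hMM.1.2
    have tle : t n m ≤ t n M :=
      (ht_mono n).monotoneOn ⟨hmm.1.1, hmm.1.2⟩ ⟨hMM.1.1, hMM.1.2⟩ hmM
    have hint1 : IntervalIntegrable f volume 0 (t n m) := by
      apply (hf_cont.mono _).intervalIntegrable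
      rw [Set.uIcc_of_le htm.1]
      exact Set.Icc_subset_Icc le_rfl htm.2
    have hint2 : IntervalIntegrable f volume (t n m) (t n M) := by
      apply (hf_cont.mono _).intervalIntegrable
      rw [Set.uIcc_of_le tle]
      exact Set.Icc_subset_Icc htm.1 htM.2
    have hI : ∫ s in (t n m)..(t n M), f s = (M:ℝ)/n - (m:ℝ)/n := by
      have hadd := intervalIntegral.integral_add_adjacent_intervals hint1 hint2
      rw [ht_def n m hmm.1.1 hmm.1.2, ht_def n M hMM.1.1 hMM.1.2] at hadd
      linarith
    have hUB : ∫ s in (t n m)..(t n M), f s ≤ Mf * (t n M - t n m) := by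
      have hle := intervalIntegral.integral_mono_on tle hint2
        (intervalIntegrable_const (c := Mf))
        (fun s hs => hMf s (Set.Icc_subset_Icc htm.1 htM.2 hs))
      simpa [intervalIntegral.integral_const, smul_eq_mul, mul_comm] using hle
    have hwin : t n M - t n m ≤ 2 * h := by
      have h1 := hmm.2.1; have h2 := hMM.2.2
      linarith
    have hdiff : (M:ℝ) - m ≤ 2 * Mf * n * h := by
      have : (M:ℝ)/n - (m:ℝ)/n ≤ Mf * (2 * h) := by
        rw [← hI] at *
        calc ∫ s in (t n m)..(t n M), f s ≤ Mf * (t n M - t n m) := hUB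
          _ ≤ Mf * (2 * h) := by nlinarith
      have h2 : ((M:ℝ) - m)/n ≤ Mf * (2*h) := by
        rw [sub_div]; exact this
      have := (div_le_iff₀ hn0).1 h2
      nlinarith
    have hsub : S ⊆ Finset.Icc m M :=
      fun i hi => Finset.mem_Icc.2 ⟨S.min'_le i hi, S.le_max' i hi⟩
    have hcard : S.card ≤ M + 1 - m := by
      have := Finset.card_le_card hsub
      simpa [Nat.card_Icc] using this
    have hcast : (S.card : ℝ) ≤ (M:ℝ) + 1 - m := by
      have h1 : (S.card : ℝ) ≤ ((M + 1 - m : ℕ) : ℝ) := by exact_mod_cast hcard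
      rwa [Nat.cast_sub (by omega), Nat.cast_add, Nat.cast_one] at h1
    linarith

theorem variance_of_increment_term_tendsto_zero
    (f : ℝ → ℝ) (cf : ℝ) (hcf : 0 < cf)
    (hf_lb : ∀ s ∈ Set.Icc (0:ℝ) 1, cf ≤ f s)
    (hf_lip : ∃ L : NNReal, LipschitzOnWith L f (Set.Icc (0:ℝ) 1))
    (hf_density : ∫ s in (0:ℝ)..1, f s = 1)
    (t : ℕ → ℕ → ℝ)
    (ht_mem : ∀ n i : ℕ, 1 ≤ i → i ≤ n → t n i ∈ Set.Icc (0:ℝ) 1)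
    (ht_def : ∀ n i : ℕ, 1 ≤ i → i ≤ n →
      ∫ s in (0:ℝ)..(t n i), f s = (i : ℝ) / n)
    (ht_mono : ∀ n : ℕ, StrictMonoOn (t n) (Set.Icc 1 n))
    (K : ℝ → ℝ)
    (hK_even : ∀ u : ℝ, K (-u) = K u)
    (hK_supp : ∀ u : ℝ, u ∉ Set.Icc (-1:ℝ) 1 → K u = 0)
    (hK_smooth : ContDiff ℝ 2 K)
    (hK''_lip : ∃ L : NNReal,
      LipschitzOnWith L (iteratedDeriv 2 K) (Set.Icc (-1:ℝ) 1))
    (hK_int : ∫ u in (-1:ℝ)..1, K u = 1)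
    (R : ℝ → ℝ → ℝ)
    (hR_cont : ContinuousOn (fun p : ℝ × ℝ => R p.1 p.2)
      (Set.Icc 0 1 ×ˢ Set.Icc 0 1))
    (hR_symm : ∀ s u : ℝ, R s u = R u s)
    (Rm Rp : ℝ → ℝ)
    (hRm : ∀ u ∈ Set.Icc (0:ℝ) 1,
      HasDerivWithinAt (fun s => R u s) (Rm u) (Set.Iio u) u)
    (hRp : ∀ u ∈ Set.Icc (0:ℝ) 1,
      HasDerivWithinAt (fun s => R u s) (Rp u) (Set.Ioi u) u)
    (α : ℝ → ℝ) (hα : ∀ u : ℝ, α u = Rm u - Rp u)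
    (hα_cont : ContinuousOn α (Set.Icc 0 1))
    (R10 R01 R20 R11 R02 : ℝ → ℝ → ℝ)
    (hR10 : ∀ u v : ℝ, u ≠ v → HasDerivAt (fun s => R s v) (R10 u v) u)
    (hR01 : ∀ u v : ℝ, u ≠ v → HasDerivAt (fun s => R u s) (R01 u v) v)
    (hR20 : ∀ u v : ℝ, u ≠ v → HasDerivAt (fun s => R10 s v) (R20 u v) u)
    (hR11 : ∀ u v : ℝ, u ≠ v → HasDerivAt (fun s => R10 u s) (R11 u v) v)
    (hR02 : ∀ u v : ℝ, u ≠ v → HasDerivAt (fun s => R01 u s) (R02 u v) v)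
    (hRij_cont : ∀ Rij ∈ ([R10, R01, R20, R11, R02] : List (ℝ → ℝ → ℝ)),
      ContinuousOn (fun p : ℝ × ℝ => Rij p.1 p.2) {p : ℝ × ℝ | p.1 ≠ p.2})
    (A : ℝ)
    (hA : ∀ Rij ∈ ([R10, R01, R20, R11, R02] : List (ℝ → ℝ → ℝ)),
      ∀ u ∈ Set.Icc (0:ℝ) 1, ∀ v ∈ Set.Icc (0:ℝ) 1, u ≠ v → |Rij u v| ≤ A)
    (x : ℝ) (hx : x ∈ Set.Ioo (0:ℝ) 1)
    (h : ℕ → ℝ) (hh_pos : ∀ n : ℕ, 0 < h n)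
    (hh_lim : Tendsto h atTop (𝓝 0))
    (hnh : Tendsto (fun n : ℕ => (n : ℝ) * h n) atTop atTop) :
    Tendsto (fun n : ℕ =>
        (1 / (4 * (n : ℝ) ^ 2)) * ∑ i ∈ trapIdx t n x (h n), ∑ k ∈ trapIdx t n x (h n),
          (phiK K x (h n) (t n i) / f (t n i)) * (phiK K x (h n) (t n k) / f (t n k))
            * (R (t n i) (t n k) - R (t n i) x - R x (t n k) + R x x))
      atTop (𝓝 0) := by
  classical
  -- bound for K
  obtain ⟨CK, hCK⟩ := isCompact_Icc.exists_bound_of_continuousOn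
    (s := Set.Icc (-1:ℝ) 1) hK_smooth.continuous.continuousOn
  set MK : ℝ := max CK 0 with hMKdef
  have hMK0 : 0 ≤ MK := le_max_right _ _
  have hMK : ∀ u : ℝ, |K u| ≤ MK := by
    intro u
    by_cases hu : u ∈ Set.Icc (-1:ℝ) 1
    · exact le_trans (by simpa [Real.norm_eq_abs] using hCK u hu) (le_max_left _ _)
    · rw [hK_supp u hu]; simpa using hMK0
  -- bound for f
  obtain ⟨L, hL⟩ := hf_lip
  set Mf : ℝ := f 0 + L with hMfdef
  have h0mem : (0:ℝ) ∈ Set.Icc (0:ℝ) 1 := by norm_num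
  have hfub : ∀ s ∈ Set.Icc (0:ℝ) 1, f s ≤ Mf := by
    intro s hs
    have hd := hL.dist_le_mul s hs 0 h0mem
    rw [Real.dist_eq, Real.dist_eq, sub_zero] at hd
    have habs : |s| ≤ 1 := abs_le.2 ⟨by linarith [hs.1], hs.2⟩
    have : f s - f 0 ≤ (L:ℝ) * |s| := le_trans (le_abs_self _) hd
    have h2 : (L:ℝ) * |s| ≤ (L:ℝ) * 1 :=
      mul_le_mul_of_nonneg_left habs (L.coe_nonneg)
    rw [hMfdef]; linarith
  have hMf0 : 0 < Mf := by
    have := hf_lb 0 h0mem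
    have := L.coe_nonneg
    rw [hMfdef]; linarith
  have hf_cont : ContinuousOn f (Set.Icc 0 1) := hL.continuousOn
  -- nonnegativity of A
  have hR01mem : R01 ∈ ([R10, R01, R20, R11, R02] : List (ℝ → ℝ → ℝ)) := by simp
  have hA0 : 0 ≤ A :=
    le_trans (abs_nonneg _)
      (hA R01 hR01mem 0 h0mem 1 (by norm_num) (by norm_num))
  have hxI : x ∈ Set.Icc (0:ℝ) 1 := ⟨le_of_lt hx.1, le_of_lt hx.2⟩
  -- Lipschitz property of R in its second variable
  have hRlip : ∀ c ∈ Set.Icc (0:ℝ) 1, ∀ v ∈ Set.Icc (0:ℝ) 1, ∀ w ∈ Set.Icc (0:ℝ) 1,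
      |R c v - R c w| ≤ A * |v - w| := by
    intro c hc
    apply lip_of_derivBound_except (fun s => R c s) (fun s => R01 c s) A c
    · have hcont : Continuous (fun s : ℝ => ((c, s) : ℝ × ℝ)) :=
        continuous_const.prodMk continuous_id
      exact hR_cont.comp hcont.continuousOn (fun s hs => ⟨hc, hs⟩)
    · intro s hs hsne
      exact hR01 c s (Ne.symm hsne)
    · intro s hs hsne
      exact hA R01 hR01mem c hc s hs (Ne.symm hsne)
  -- the bounding sequence
  set C0 : ℝ := A * MK ^ 2 / (2 * cf ^ 2) with hC0def
  set b : ℕ → ℝ := fun n =>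
    C0 * (4 * Mf ^ 2 * h n + 4 * Mf / n + 1 / ((n:ℝ) ^ 2 * h n)) with hbdef
  have hb_lim : Tendsto b atTop (𝓝 0) := by
    have h1 : Tendsto (fun n : ℕ => 4 * Mf ^ 2 * h n) atTop (𝓝 0) := by
      simpa using hh_lim.const_mul (4 * Mf ^ 2)
    have h2 : Tendsto (fun n : ℕ => 4 * Mf / (n:ℝ)) atTop (𝓝 0) :=
      tendsto_const_div_atTop_nhds_zero_nat (4 * Mf)
    have h3 : Tendsto (fun n : ℕ => 1 / ((n:ℝ) ^ 2 * h n)) atTop (𝓝 0) := by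
      have hsq : Tendsto (fun n : ℕ => (n:ℝ) ^ 2 * h n) atTop atTop := by
        have := tendsto_natCast_atTop_atTop (R := ℝ) |>.atTop_mul_atTop₀ hnh
        simpa [pow_two, mul_assoc] using this
      simpa only [one_div, Pi.inv_def] using hsq.inv_tendsto_atTop
    have := ((h1.add h2).add h3).const_mul C0
    simpa only [add_zero, zero_add, mul_zero] using this
  apply squeeze_zero_norm' _ hb_lim
  filter_upwards [eventually_ge_atTop 1] with n hn
  have hn0 : (0:ℝ) < n := by exact_mod_cast hn
  have hhn : 0 < h n := hh_pos n
  set S := trapIdx t n x (h n) with hSdef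
  -- membership facts
  have hmemS : ∀ i ∈ S, t n i ∈ Set.Icc (0:ℝ) 1 ∧ t n i ∈ Set.Icc (x - h n) (x + h n) := by
    intro i hi
    rw [hSdef, trapIdx, Finset.mem_filter, Finset.mem_Icc] at hi
    exact ⟨ht_mem n i hi.1.1 (le_trans hi.1.2 (Nat.sub_le n 1)), hi.2.1⟩
  -- bound on the kernel factor
  have hker : ∀ s ∈ Set.Icc (0:ℝ) 1, |phiK K x (h n) s / f s| ≤ MK / (h n * cf) := by
    intro s hs
    have hfs : cf ≤ f s := hf_lb s hs
    have hfs0 : 0 < f s := lt_of_lt_of_le hcf hfs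
    rw [abs_div, phiK, abs_mul, abs_of_nonneg (by positivity : (0:ℝ) ≤ 1 / h n),
      abs_of_pos hfs0, div_le_div_iff₀ (by positivity) (by positivity)]
    have h1 : |K ((x - s) / h n)| ≤ MK := hMK _
    have heq : 1 / h n * |K ((x - s) / h n)| * (h n * cf)
        = |K ((x - s) / h n)| * cf := by
      field_simp
    rw [heq]
    exact mul_le_mul h1 hfs (le_of_lt hcf) hMK0
  -- bound on the bracket
  have hbr : ∀ c ∈ Set.Icc (0:ℝ) 1, ∀ s ∈ Set.Icc (0:ℝ) 1,
      s ∈ Set.Icc (x - h n) (x + h n) →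
      |R c s - R c x - R x s + R x x| ≤ 2 * A * h n := by
    intro c hc s hs hsw
    have hsx : |s - x| ≤ h n := abs_le.2 ⟨by linarith [hsw.1], by linarith [hsw.2]⟩
    have h1 : |R c s - R c x| ≤ A * |s - x| := hRlip c hc s hs x hxI
    have h2 : |R x s - R x x| ≤ A * |s - x| := hRlip x hxI s hs x hxI
    have heq : R c s - R c x - R x s + R x x = (R c s - R c x) - (R x s - R x x) := by ring
    rw [heq]
    calc |(R c s - R c x) - (R x s - R x x)| ≤ |R c s - R c x| + |R x s - R x x| :=
          abs_sub _ _
      _ ≤ A * |s - x| + A * |s - x| := add_le_add h1 h2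
      _ ≤ A * h n + A * h n := by
          have := mul_le_mul_of_nonneg_left hsx hA0
          linarith
      _ = 2 * A * h n := by ring
  -- per-term bound
  set τ : ℝ := MK / (h n * cf) * (MK / (h n * cf)) * (2 * A * h n) with hτdef
  have hτ0 : 0 ≤ τ := by positivity
  have hterm : ∀ i ∈ S, ∀ k ∈ S,
      |(phiK K x (h n) (t n i) / f (t n i)) * (phiK K x (h n) (t n k) / f (t n k))
        * (R (t n i) (t n k) - R (t n i) x - R x (t n k) + R x x)| ≤ τ := by
    intro i hi k hk
    obtain ⟨hti, _⟩ := hmemS i hi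
    obtain ⟨htk, htkw⟩ := hmemS k hk
    rw [abs_mul, abs_mul]
    have b1 := hker (t n i) hti
    have b2 := hker (t n k) htk
    have b3 := hbr (t n i) hti (t n k) htk htkw
    rw [hτdef]
    gcongr
  -- sum bound
  set Tm : ℕ → ℕ → ℝ := fun i k =>
    (phiK K x (h n) (t n i) / f (t n i)) * (phiK K x (h n) (t n k) / f (t n k))
      * (R (t n i) (t n k) - R (t n i) x - R x (t n k) + R x x) with hTmdef
  have hsum : |∑ i ∈ S, ∑ k ∈ S, Tm i k| ≤ (S.card : ℝ) * ((S.card : ℝ) * τ) := by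
    calc |∑ i ∈ S, ∑ k ∈ S, Tm i k| ≤ ∑ i ∈ S, |∑ k ∈ S, Tm i k| :=
          Finset.abs_sum_le_sum_abs _ _
      _ ≤ ∑ i ∈ S, (S.card : ℝ) * τ := by
          apply Finset.sum_le_sum
          intro i hi
          calc |∑ k ∈ S, Tm i k| ≤ ∑ k ∈ S, |Tm i k| := Finset.abs_sum_le_sum_abs _ _
            _ ≤ (S.card : ℝ) * τ := by
                have := Finset.sum_le_card_nsmul S (fun k => |Tm i k|) τ
                  (fun k hk => hterm i hi k hk)
                simpa [nsmul_eq_mul] using this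
      _ = (S.card : ℝ) * ((S.card : ℝ) * τ) := by
          rw [Finset.sum_const, nsmul_eq_mul]
  -- cardinality bound
  have hcard : ((S.card : ℕ) : ℝ) ≤ 2 * Mf * n * h n + 1 :=
    trapIdx_card_le f Mf (le_of_lt hMf0) hf_cont hfub t ht_mem ht_def ht_mono
      x n hn (h n) hhn
  set P : ℝ := 2 * Mf * n * h n + 1 with hPdef
  have hP0 : (0:ℝ) ≤ P := by positivity
  have hcard2 : ((S.card : ℕ) : ℝ) * ((S.card : ℕ) : ℝ) ≤ P * P := by
    have hc0 : (0:ℝ) ≤ ((S.card : ℕ) : ℝ) := Nat.cast_nonneg _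
    nlinarith
  -- final estimate
  rw [Real.norm_eq_abs, abs_mul,
    abs_of_nonneg (by positivity : (0:ℝ) ≤ 1 / (4 * (n:ℝ) ^ 2))]
  calc 1 / (4 * (n:ℝ) ^ 2) * |∑ i ∈ S, ∑ k ∈ S, Tm i k|
      ≤ 1 / (4 * (n:ℝ) ^ 2) * ((S.card : ℝ) * ((S.card : ℝ) * τ)) := by
        apply mul_le_mul_of_nonneg_left hsum (by positivity)
    _ ≤ 1 / (4 * (n:ℝ) ^ 2) * (P * (P * τ)) := by
        apply mul_le_mul_of_nonneg_left _ (by positivity)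
        calc (S.card : ℝ) * ((S.card : ℝ) * τ) = ((S.card : ℝ) * (S.card : ℝ)) * τ := by ring
          _ ≤ (P * P) * τ := mul_le_mul_of_nonneg_right hcard2 hτ0
          _ = P * (P * τ) := by ring
    _ = b n := by
        rw [hbdef, hPdef, hτdef, hC0def]
        have hne1 : h n ≠ 0 := ne_of_gt hhn
        have hne2 : (n:ℝ) ≠ 0 := ne_of_gt hn0
        have hne3 : cf ≠ 0 := ne_of_gt hcf
        field_simp
        ring
end

section
/- Suppose f is a Lipschitz-continuous probability density on [0,1] with 0 < inf f, generating the regular design, K is an even kernel supported in [−1,1], twice continuously differentiable with K'' Lipschitz, and x ∈ (0,1). For bandwidths h = h_n with h_n → 0 and n h_n → ∞, the trapezoidal weights W_n = (1/(2n)) Σ_{i=1}^{N−1} [ (φ_{x,h}/f)(t_{x,i}) + (φ_{x,h}/f)(t_{x,i+1}) ] satisfy lim_{n→∞} W_n = ∫_{−1}^{1} K(t) dt. -/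
open MeasureTheory Filter
open scoped Classical Topology

/-- The trapezoidal sum (1/(2n)) Σ_{k=1}^{N−1} (G(t_{x,k}) + G(t_{x,k+1})). -/
noncomputable def trapSum (t : ℕ → ℕ → ℝ) (n : ℕ) (x h : ℝ) (G : ℝ → ℝ) : ℝ :=
  (1 / (2 * (n : ℝ))) * ∑ i ∈ trapIdx t n x h, (G (t n i) + G (t n (i + 1)))

/- STATEMENT 18: Let f be a Lipschitz-continuous probability density on [0,1]
   with 0 < inf f generating the regular design, K an even C² kernel supported
   in [−1,1] with K'' Lipschitz, x ∈ (0,1).  For bandwidths h_n → 0 with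
   n·h_n → ∞, the trapezoidal weights
   W_n = (1/(2n)) Σ_{i=1}^{N−1} [(φ_{x,h}/f)(t_{x,i}) + (φ_{x,h}/f)(t_{x,i+1})]
   satisfy W_n → ∫_{−1}^1 K(t) dt. -/

set_option maxHeartbeats 1000000

lemma div_two_point (A B u v c : ℝ) (hc : 0 < c) (hu : c ≤ u) (hv : c ≤ v) :
    |A / u - B / v| ≤ |A - B| / c + |B| * |u - v| / c ^ 2 := by
  have hu0 : 0 < u := lt_of_lt_of_le hc hu
  have hv0 : 0 < v := lt_of_lt_of_le hc hv
  have key : A / u - B / v = (A - B) / u + B * (v - u) / (u * v) := by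
    field_simp; ring
  rw [key]
  refine (abs_add_le _ _).trans (add_le_add ?_ ?_)
  · rw [abs_div, abs_of_pos hu0]
    exact div_le_div_of_nonneg_left (abs_nonneg _) hc hu
  · rw [abs_div, abs_mul, abs_of_pos (mul_pos hu0 hv0), ← abs_sub_comm u v]
    have h1 : c ^ 2 ≤ u * v := by nlinarith
    exact div_le_div_of_nonneg_left (by positivity) (by positivity) h1

lemma kernel_subst (K : ℝ → ℝ) (x h : ℝ) (hh : 0 < h) :
    ∫ s in (x - h)..(x + h), (1 / h) * K ((x - s) / h) = ∫ u in (-1:ℝ)..1, K u := by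
  rw [intervalIntegral.integral_const_mul]
  rw [intervalIntegral.integral_comp_sub_left (fun y => K (y / h)) x]
  have : x - (x + h) = -h := by ring
  rw [this]
  have : x - (x - h) = h := by ring
  rw [this]
  rw [intervalIntegral.integral_comp_div (c := h) K hh.ne']
  rw [neg_div, div_self hh.ne', smul_eq_mul]
  field_simp

lemma quant
    (f : ℝ → ℝ) (cf Mf Lf : ℝ) (hcf : 0 < cf) (hLf : 0 ≤ Lf)
    (hf_lb : ∀ s ∈ Set.Icc (0:ℝ) 1, cf ≤ f s)
    (hf_ub : ∀ s ∈ Set.Icc (0:ℝ) 1, f s ≤ Mf)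
    (hf_lip : ∀ s ∈ Set.Icc (0:ℝ) 1, ∀ u ∈ Set.Icc (0:ℝ) 1, |f s - f u| ≤ Lf * |s - u|)
    (hf_cont : ContinuousOn f (Set.Icc (0:ℝ) 1))
    (hf_density : ∫ s in (0:ℝ)..1, f s = 1)
    (t : ℕ → ℕ → ℝ)
    (ht_mem : ∀ n i : ℕ, 1 ≤ i → i ≤ n → t n i ∈ Set.Icc (0:ℝ) 1)
    (ht_def : ∀ n i : ℕ, 1 ≤ i → i ≤ n →
      ∫ s in (0:ℝ)..(t n i), f s = (i : ℝ) / n)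
    (ht_mono : ∀ n : ℕ, StrictMonoOn (t n) (Set.Icc 1 n))
    (K : ℝ → ℝ) (hK_cont : Continuous K)
    (M₀ M₁ : ℝ) (hM₁ : 0 ≤ M₁)
    (hM₀ : ∀ u : ℝ, |K u| ≤ M₀)
    (hK_lip : ∀ u v : ℝ, |K u - K v| ≤ M₁ * |u - v|)
    (x : ℝ) (n : ℕ) (h : ℝ)
    (hh0 : 0 < h) (hh1 : h ≤ 1) (hax : 0 < x - h) (hbx : x + h < 1)
    (hnh : 4 ≤ cf * (n * h)) (hn1 : 1 ≤ n) :
    |trapSum t n x h (fun s => phiK K x h s / f s) - ∫ u in (-1:ℝ)..1, K u|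
      ≤ (2*Mf^2*M₁/cf^3 + 2*Mf^2*M₀*Lf/cf^4 + 2*M₀/cf) / (n * h) := by
  have hn0 : (0:ℝ) < n := by exact_mod_cast hn1
  have hMf : cf ≤ Mf := le_trans (hf_lb 0 (by norm_num)) (hf_ub 0 (by norm_num))
  have hMf0 : 0 < Mf := lt_of_lt_of_le hcf hMf
  have hM₀0 : 0 ≤ M₀ := le_trans (abs_nonneg _) (hM₀ 0)
  set a := x - h with ha_def
  set b := x + h with hb_def
  have hab : a < b := by simp [ha_def, hb_def]; linarith
  have ha0 : 0 < a := hax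
  have hb1 : b < 1 := hbx
  set F : ℝ → ℝ := fun y => ∫ s in (0:ℝ)..y, f s with hF_def
  set φ : ℝ → ℝ := fun s => phiK K x h s with hφ_def
  set G : ℝ → ℝ := fun s => φ s / f s with hG_def
  set δ : ℝ := 1 / (cf * n) with hδ_def
  have hδ0 : 0 < δ := by positivity
  -- integrability of f on subintervals of [0,1]
  have hf_int : ∀ u ∈ Set.Icc (0:ℝ) 1, ∀ v ∈ Set.Icc (0:ℝ) 1,
      IntervalIntegrable f MeasureTheory.volume u v := by
    intro u hu v hv
    exact (hf_cont.mono (Set.uIcc_subset_Icc hu hv)).intervalIntegrable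
  -- F difference
  have hF_diff : ∀ u ∈ Set.Icc (0:ℝ) 1, ∀ v ∈ Set.Icc (0:ℝ) 1,
      F v - F u = ∫ s in u..v, f s := by
    intro u hu v hv
    have h1 := intervalIntegral.integral_add_adjacent_intervals
      (hf_int 0 (by norm_num) u hu) (hf_int u hu v hv)
    simp only [hF_def]
    linarith [h1]
  have hF_low : ∀ u ∈ Set.Icc (0:ℝ) 1, ∀ v ∈ Set.Icc (0:ℝ) 1, u ≤ v →
      cf * (v - u) ≤ F v - F u := by
    intro u hu v hv huv
    rw [hF_diff u hu v hv]
    have : cf * (v - u) = ∫ s in u..v, cf := by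
      simp [intervalIntegral.integral_const, smul_eq_mul]; ring
    rw [this]
    apply intervalIntegral.integral_mono_on huv (intervalIntegrable_const)
      (hf_int u hu v hv)
    intro s hs
    exact hf_lb s ⟨le_trans hu.1 hs.1, le_trans hs.2 hv.2⟩
  have hF_up : ∀ u ∈ Set.Icc (0:ℝ) 1, ∀ v ∈ Set.Icc (0:ℝ) 1, u ≤ v →
      F v - F u ≤ Mf * (v - u) := by
    intro u hu v hv huv
    rw [hF_diff u hu v hv]
    have : Mf * (v - u) = ∫ s in u..v, Mf := by
      simp [intervalIntegral.integral_const, smul_eq_mul]; ring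
    rw [this]
    apply intervalIntegral.integral_mono_on huv (hf_int u hu v hv)
      intervalIntegrable_const
    intro s hs
    exact hf_ub s ⟨le_trans hu.1 hs.1, le_trans hs.2 hv.2⟩
  have hF0 : F 0 = 0 := by simp [hF_def]
  have hF1 : F 1 = 1 := hf_density
  have haI : a ∈ Set.Icc (0:ℝ) 1 := ⟨le_of_lt ha0, by linarith⟩
  have hbI : b ∈ Set.Icc (0:ℝ) 1 := ⟨by linarith, le_of_lt hb1⟩
  have hFa0 : 0 < F a := by
    have := hF_low 0 (by norm_num) a haI (le_of_lt ha0)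
    nlinarith
  have hFb1 : F b ≤ 1 := by
    have := hF_low b hbI 1 (by norm_num) (le_of_lt hb1)
    nlinarith
  have hFa_nonneg : 0 ≤ (n:ℝ) * F a := by positivity
  set p : ℕ := ⌈(n:ℝ) * F a⌉₊ with hp_def
  set q : ℕ := ⌊(n:ℝ) * F b⌋₊ with hq_def
  have hp1 : 1 ≤ p := Nat.one_le_ceil_iff.mpr (by positivity)
  have hFb_pos : 0 < F b := by
    have := hF_low a haI b hbI (le_of_lt hab)
    nlinarith
  have hFb_nonneg : 0 ≤ (n:ℝ) * F b := by positivity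
  have hq_le : (q:ℝ) ≤ (n:ℝ) * F b := Nat.floor_le hFb_nonneg
  have hqn : q ≤ n := by
    have : (q:ℝ) ≤ (n:ℝ) := le_trans hq_le (by nlinarith)
    exact_mod_cast this
  have hp_lt : (p:ℝ) < (n:ℝ) * F a + 1 := Nat.ceil_lt_add_one hFa_nonneg
  have hp_ge : (n:ℝ) * F a ≤ (p:ℝ) := Nat.le_ceil _
  have hq_gt : (n:ℝ) * F b - 1 < (q:ℝ) := by
    have := Nat.lt_floor_add_one ((n:ℝ) * F b)
    linarith
  have hFba : cf * (b - a) ≤ F b - F a := hF_low a haI b hbI (le_of_lt hab)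
  have hba : b - a = 2 * h := by simp [ha_def, hb_def]; ring
  have hpq6 : (p:ℝ) + 6 ≤ (q:ℝ) := by
    have e0 := mul_le_mul_of_nonneg_left hFba hn0.le
    have e1 : (n:ℝ) * (cf * (b - a)) = 2 * (cf * ((n:ℝ) * h)) := by rw [hba]; ring
    have e2 : (n:ℝ) * (F b - F a) = (n:ℝ) * F b - (n:ℝ) * F a := by ring
    linarith
  have hpq : p + 1 ≤ q := by
    have : (p:ℝ) + 1 ≤ (q:ℝ) := by linarith
    exact_mod_cast this
  -- characterization of membership
  have htI : ∀ i : ℕ, 1 ≤ i → i ≤ n → t n i ∈ Set.Icc (0:ℝ) 1 := fun i h1 h2 => ht_mem n i h1 h2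
  have hFt : ∀ i : ℕ, 1 ≤ i → i ≤ n → F (t n i) = (i:ℝ) / n := fun i h1 h2 => ht_def n i h1 h2
  have hchar1 : ∀ i : ℕ, 1 ≤ i → i ≤ n → (a ≤ t n i ↔ p ≤ i) := by
    intro i h1 h2
    have hti := htI i h1 h2
    have hFti := hFt i h1 h2
    constructor
    · intro hai
      have h6 := hF_low a haI (t n i) hti hai
      have h7 : 0 ≤ cf * (t n i - a) := mul_nonneg hcf.le (sub_nonneg.mpr hai)
      have h5 : F a ≤ (i:ℝ)/n := by rw [← hFti]; linarith
      have h8 : F a * n ≤ (i:ℝ) := (le_div_iff₀ hn0).mp h5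
      exact Nat.ceil_le.mpr (by linarith [h8, mul_comm (F a) (n:ℝ)])
    · intro hpi
      by_contra hcon
      push_neg at hcon
      have hlt := hF_low (t n i) hti a haI hcon.le
      have h7 : 0 < cf * (a - t n i) := mul_pos hcf (sub_pos.mpr hcon)
      have h1' : (i:ℝ)/n < F a := by rw [← hFti]; linarith
      have h3' : (p:ℝ) ≤ (i:ℝ) := by exact_mod_cast hpi
      have h9 : (i:ℝ) < F a * n := (div_lt_iff₀ hn0).mp h1'
      have h10 := mul_comm (F a) (n:ℝ)
      linarith
  have hchar2 : ∀ i : ℕ, 1 ≤ i → i ≤ n → (t n i ≤ b ↔ i ≤ q) := by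
    intro i h1 h2
    have hti := htI i h1 h2
    have hFti := hFt i h1 h2
    constructor
    · intro hbi
      have h6 := hF_low (t n i) hti b hbI hbi
      have h7 : 0 ≤ cf * (b - t n i) := mul_nonneg hcf.le (sub_nonneg.mpr hbi)
      have h5 : (i:ℝ)/n ≤ F b := by rw [← hFti]; linarith
      have h8 : (i:ℝ) ≤ F b * n := (div_le_iff₀ hn0).mp h5
      exact Nat.le_floor (by linarith [mul_comm (F b) (n:ℝ)])
    · intro hqi
      by_contra hcon
      push_neg at hcon
      have hlt := hF_low b hbI (t n i) hti hcon.le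
      have h7 : 0 < cf * (t n i - b) := mul_pos hcf (sub_pos.mpr hcon)
      have h1' : F b < (i:ℝ)/n := by rw [← hFti]; linarith
      have h3' : (i:ℝ) ≤ (q:ℝ) := by exact_mod_cast hqi
      have h9 : F b * n < (i:ℝ) := (lt_div_iff₀ hn0).mp h1'
      have h10 := mul_comm (F b) (n:ℝ)
      linarith
  -- monotonicity of design points
  have ht_le : ∀ i : ℕ, 1 ≤ i → i + 1 ≤ n → t n i ≤ t n (i+1) := by
    intro i h1 h2
    exact le_of_lt ((ht_mono n) (Set.mem_Icc.mpr ⟨h1, by omega⟩)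
      (Set.mem_Icc.mpr ⟨by omega, h2⟩) (by omega))
  -- trapIdx identity
  have htrap : trapIdx t n x h = Finset.Ico p q := by
    ext i
    simp only [trapIdx, Finset.mem_filter, Finset.mem_Icc, Finset.mem_Ico, Set.mem_Icc]
    constructor
    · rintro ⟨⟨hi1, hi2⟩, ⟨hta, _⟩, ⟨_, htb⟩⟩
      have hin : i ≤ n := by omega
      have hin' : i + 1 ≤ n := by omega
      have e1 : p ≤ i := (hchar1 i hi1 hin).mp hta
      have e2 : i + 1 ≤ q := (hchar2 (i+1) (by omega) hin').mp htb
      exact ⟨e1, by omega⟩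
    · rintro ⟨e1, e2⟩
      have hi1 : 1 ≤ i := le_trans hp1 e1
      have hin' : i + 1 ≤ n := by omega
      have hin : i ≤ n := by omega
      refine ⟨⟨hi1, by omega⟩, ⟨?_, ?_⟩, ⟨?_, ?_⟩⟩
      · exact (hchar1 i hi1 hin).mpr e1
      · exact (hchar2 i hi1 hin).mpr (by omega)
      · exact (hchar1 (i+1) (by omega) hin').mpr (by omega)
      · exact (hchar2 (i+1) (by omega) hin').mpr (by omega)
  -- spacing
  have hsp : ∀ i : ℕ, 1 ≤ i → i + 1 ≤ n → t n (i+1) - t n i ≤ δ := by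
    intro i h1 h2
    have hle := ht_le i h1 h2
    have h6 := hF_low (t n i) (htI i h1 (by omega)) (t n (i+1)) (htI (i+1) (by omega) h2) hle
    rw [hFt i h1 (by omega), hFt (i+1) (by omega) h2] at h6
    have e : ((i:ℝ)+1)/n - (i:ℝ)/n = 1/n := by field_simp; ring
    push_cast at h6
    rw [e] at h6
    rw [hδ_def, le_div_iff₀ (by positivity : (0:ℝ) < cf * n)]
    have h8 := mul_le_mul_of_nonneg_left h6 hn0.le
    have h9 : (n:ℝ) * (1/n) = 1 := by field_simp
    rw [h9] at h8
    linarith [h8]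
  have himp : ∀ d : ℝ, cf * d ≤ 1/n → d ≤ δ := by
    intro d hd
    rw [hδ_def, le_div_iff₀ (by positivity : (0:ℝ) < cf * n)]
    have h8 := mul_le_mul_of_nonneg_left hd hn0.le
    have h9 : (n:ℝ) * (1/n) = 1 := by field_simp
    rw [h9] at h8
    linarith [h8]
  -- endpoint bounds
  have hpn : p ≤ n := by omega
  have hq1 : 1 ≤ q := by omega
  have htpI : t n p ∈ Set.Icc (0:ℝ) 1 := htI p hp1 hpn
  have htqI : t n q ∈ Set.Icc (0:ℝ) 1 := htI q hq1 hqn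
  have htpa : a ≤ t n p := (hchar1 p hp1 hpn).mpr le_rfl
  have htqb : t n q ≤ b := (hchar2 q hq1 hqn).mpr le_rfl
  have htpa' : t n p - a ≤ δ := by
    apply himp
    have h6 := hF_low a haI (t n p) htpI htpa
    rw [hFt p hp1 hpn] at h6
    have h7 : (p:ℝ)/n ≤ F a + 1/n := by
      rw [div_le_iff₀ hn0]
      have h9 : (F a + 1/n) * n = n * F a + 1 := by field_simp
      rw [h9]; linarith
    linarith
  have htqb' : b - t n q ≤ δ := by
    apply himp
    have h6 := hF_low (t n q) htqI b hbI htqb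
    rw [hFt q hq1 hqn] at h6
    have h7 : F b - 1/n ≤ (q:ℝ)/n := by
      rw [sub_le_iff_le_add, ← add_div, le_div_iff₀ hn0]
      have h9 : F b * n = n * F b := by ring
      rw [h9]; linarith
    linarith
  -- kernel pointwise bounds
  have hφ_bound : ∀ s : ℝ, |φ s| ≤ M₀ / h := by
    intro s
    simp only [hφ_def, phiK]
    rw [abs_mul, abs_of_pos (by positivity : (0:ℝ) < 1/h)]
    calc 1/h * |K ((x - s)/h)| ≤ 1/h * M₀ := by
          exact mul_le_mul_of_nonneg_left (hM₀ _) (by positivity)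
      _ = M₀ / h := by ring
  have hφ2 : ∀ s u : ℝ, |φ s - φ u| ≤ (M₁/h^2) * |s - u| := by
    intro s u
    simp only [hφ_def, phiK]
    have e1 : 1/h * K ((x - s)/h) - 1/h * K ((x - u)/h)
        = 1/h * (K ((x - s)/h) - K ((x - u)/h)) := by ring
    rw [e1, abs_mul, abs_of_pos (by positivity : (0:ℝ) < 1/h)]
    have e2 : |(x - s)/h - (x - u)/h| = |s - u| / h := by
      rw [div_sub_div_same, abs_div, abs_of_pos hh0]
      congr 1
      rw [abs_sub_comm]
      congr 1
      ring
    calc 1/h * |K ((x - s)/h) - K ((x - u)/h)|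
        ≤ 1/h * (M₁ * ((|s - u|)/h)) := by
          apply mul_le_mul_of_nonneg_left _ (by positivity)
          rw [← e2]; exact hK_lip _ _
      _ = (M₁/h^2) * |s - u| := by
          rw [div_mul_eq_mul_div, div_mul_eq_mul_div, one_mul, mul_div_assoc,
            div_div, ← sq]
          ring
  set LipG : ℝ := M₁/(cf*h^2) + M₀*Lf/(cf^2*h) with hLipG_def
  have hLipG0 : 0 ≤ LipG := by positivity
  have hG2 : ∀ s ∈ Set.Icc (0:ℝ) 1, ∀ u ∈ Set.Icc (0:ℝ) 1,
      |G s - G u| ≤ LipG * |s - u| := by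
    intro s hs u hu
    have h1 := div_two_point (φ s) (φ u) (f s) (f u) cf hcf (hf_lb s hs) (hf_lb u hu)
    have h2 : |φ s - φ u| / cf ≤ (M₁/(cf*h^2)) * |s - u| := by
      rw [div_le_iff₀ hcf]
      have e : M₁/(cf*h^2) * |s - u| * cf = (M₁/h^2) * |s - u| := by field_simp
      rw [e]; exact hφ2 s u
    have h3 : |φ u| * |f s - f u| / cf^2 ≤ (M₀*Lf/(cf^2*h)) * |s - u| := by
      rw [div_le_iff₀ (by positivity : (0:ℝ) < cf^2)]
      have e : M₀*Lf/(cf^2*h) * |s - u| * cf^2 = (M₀/h)*(Lf*|s - u|) := by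
        field_simp
      rw [e]
      exact mul_le_mul (hφ_bound u) (hf_lip s hs u hu) (abs_nonneg _) (by positivity)
    have e5 : LipG * |s - u| = (M₁/(cf*h^2)) * |s - u| + (M₀*Lf/(cf^2*h)) * |s - u| := by
      rw [hLipG_def]; ring
    show |φ s / f s - φ u / f u| ≤ LipG * |s - u|
    rw [e5]
    exact h1.trans (add_le_add h2 h3)
  -- per-term error bound
  set Eterm : ℝ := LipG * δ * Mf * δ with hEterm_def
  have hEterm0 : 0 ≤ Eterm := by positivity
  have hφ_cont : Continuous φ := by
    rw [hφ_def]
    simp only [phiK]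
    exact continuous_const.mul (hK_cont.comp ((continuous_const.sub continuous_id).div_const h))
  have hφ_int : ∀ u v : ℝ, IntervalIntegrable φ MeasureTheory.volume u v :=
    fun u v => hφ_cont.intervalIntegrable _ _
  have hterm : ∀ i ∈ Finset.Ico p q,
      |(1/(2*(n:ℝ))) * (G (t n i) + G (t n (i+1))) - ∫ s in (t n i)..(t n (i+1)), φ s|
        ≤ Eterm := by
    intro i hi
    rw [Finset.mem_Ico] at hi
    have hi1 : 1 ≤ i := by omega
    have hin : i ≤ n := by omega
    have hin' : i + 1 ≤ n := by omega
    have hti : t n i ∈ Set.Icc (0:ℝ) 1 := htI i hi1 hin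
    have hti1 : t n (i+1) ∈ Set.Icc (0:ℝ) 1 := htI (i+1) (by omega) hin'
    have hle := ht_le i hi1 hin'
    have hd := hsp i hi1 hin'
    have hsub : Set.Icc (t n i) (t n (i+1)) ⊆ Set.Icc (0:ℝ) 1 :=
      Set.Icc_subset_Icc hti.1 hti1.2
    have hfint_i : ∫ s in (t n i)..(t n (i+1)), f s = 1/n := by
      rw [← hF_diff (t n i) hti (t n (i+1)) hti1, hFt i hi1 hin,
        hFt (i+1) (by omega) hin']
      push_cast
      field_simp
      ring
    set ci : ℝ := (G (t n i) + G (t n (i+1)))/2 with hci_def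
    have hfci : IntervalIntegrable (fun s => ci * f s) MeasureTheory.volume
        (t n i) (t n (i+1)) := (hf_int _ hti _ hti1).const_mul ci
    have claim1 : (1/(2*(n:ℝ))) * (G (t n i) + G (t n (i+1)))
        = ∫ s in (t n i)..(t n (i+1)), ci * f s := by
      rw [intervalIntegral.integral_const_mul, hfint_i, hci_def]
      ring
    rw [claim1, ← intervalIntegral.integral_sub hfci (hφ_int _ _)]
    have hb1 : ‖∫ s in (t n i)..(t n (i+1)), (ci * f s - φ s)‖
        ≤ (LipG * δ * Mf) * |t n (i+1) - t n i| := by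
      apply intervalIntegral.norm_integral_le_of_norm_le_const
      intro s hs
      rw [Set.uIoc_of_le hle] at hs
      have hsI : s ∈ Set.Icc (t n i) (t n (i+1)) := ⟨le_of_lt hs.1, hs.2⟩
      have hs01 : s ∈ Set.Icc (0:ℝ) 1 := hsub hsI
      have hfs : cf ≤ f s := hf_lb s hs01
      have hfs0 : f s ≠ 0 := ne_of_gt (lt_of_lt_of_le hcf hfs)
      have eφ : φ s = G s * f s := by
        show φ s = (φ s / f s) * f s
        field_simp
      have e3 : ci * f s - φ s = (ci - G s) * f s := by rw [eφ]; ring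
      rw [Real.norm_eq_abs, e3, abs_mul]
      have hGi : |G (t n i) - G s| ≤ LipG * δ := by
        have hh := hG2 (t n i) hti s hs01
        have habs : |t n i - s| ≤ δ := by
          rw [abs_of_nonpos (by linarith [hsI.1])]
          linarith [hsI.2, hd]
        exact hh.trans (mul_le_mul_of_nonneg_left habs hLipG0)
      have hGi1 : |G (t n (i+1)) - G s| ≤ LipG * δ := by
        have hh := hG2 (t n (i+1)) hti1 s hs01
        have habs : |t n (i+1) - s| ≤ δ := by
          rw [abs_of_nonneg (by linarith [hsI.2])]
          linarith [hsI.1, hd]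
        exact hh.trans (mul_le_mul_of_nonneg_left habs hLipG0)
      have hci : |ci - G s| ≤ LipG * δ := by
        have e4 : ci - G s = ((G (t n i) - G s) + (G (t n (i+1)) - G s))/2 := by
          rw [hci_def]; ring
        rw [e4]
        calc |((G (t n i) - G s) + (G (t n (i+1)) - G s))/2|
            = |(G (t n i) - G s) + (G (t n (i+1)) - G s)|/2 := by
              rw [abs_div]; norm_num
          _ ≤ (|G (t n i) - G s| + |G (t n (i+1)) - G s|)/2 := by
              have := abs_add_le (G (t n i) - G s) (G (t n (i+1)) - G s)
              linarith
          _ ≤ LipG * δ := by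
              rw [div_le_iff₀ (by norm_num : (0:ℝ) < 2)]
              linarith [hGi, hGi1]
      have hfsb : |f s| ≤ Mf := by
        rw [abs_of_pos (lt_of_lt_of_le hcf hfs)]
        exact hf_ub s hs01
      exact mul_le_mul hci hfsb (abs_nonneg _) (by positivity)
    rw [Real.norm_eq_abs] at hb1
    calc |∫ s in (t n i)..(t n (i+1)), (ci * f s - φ s)|
        ≤ (LipG * δ * Mf) * |t n (i+1) - t n i| := hb1
      _ ≤ (LipG * δ * Mf) * δ := by
          apply mul_le_mul_of_nonneg_left _ (by positivity)
          rw [abs_of_nonneg (by linarith)]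
          exact hd
      _ = Eterm := by rw [hEterm_def]
  -- telescoping
  have htel : ∑ i ∈ Finset.Ico p q, ∫ s in (t n i)..(t n (i+1)), φ s
      = ∫ s in (t n p)..(t n q), φ s := by
    apply intervalIntegral.sum_integral_adjacent_intervals_Ico (by omega : p ≤ q)
    intro k _
    exact hφ_int _ _
  have hW : trapSum t n x h (fun s => phiK K x h s / f s)
      = ∑ i ∈ Finset.Ico p q, (1/(2*(n:ℝ))) * (G (t n i) + G (t n (i+1))) := by
    rw [trapSum, htrap, Finset.mul_sum]
  have hsum : |(∑ i ∈ Finset.Ico p q, (1/(2*(n:ℝ))) * (G (t n i) + G (t n (i+1))))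
      - ∫ s in (t n p)..(t n q), φ s| ≤ ((q - p : ℕ):ℝ) * Eterm := by
    rw [← htel, ← Finset.sum_sub_distrib]
    refine (Finset.abs_sum_le_sum_abs _ _).trans ?_
    refine (Finset.sum_le_sum hterm).trans ?_
    rw [Finset.sum_const, Nat.card_Ico, nsmul_eq_mul]
  have hcount : ((q - p : ℕ):ℝ) ≤ 2 * Mf * n * h := by
    rw [Nat.cast_sub (by omega : p ≤ q)]
    have h2 := hF_up a haI b hbI hab.le
    have h3 := mul_le_mul_of_nonneg_left h2 hn0.le
    have e2 : (n:ℝ)*(F b - F a) = n*F b - n*F a := by ring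
    have e3 : (n:ℝ)*(Mf*(b-a)) = 2*Mf*n*h := by rw [hba]; ring
    linarith
  -- boundary terms
  have hLint : ∫ u in (-1:ℝ)..1, K u = ∫ s in a..b, φ s := by
    rw [ha_def, hb_def, ← kernel_subst K x h hh0]
    simp only [hφ_def, phiK]
  have hsplit : ∫ s in a..b, φ s = (∫ s in a..(t n p), φ s)
      + (∫ s in (t n p)..(t n q), φ s) + (∫ s in (t n q)..b, φ s) := by
    have e1 := intervalIntegral.integral_add_adjacent_intervals
      (hφ_int (t n p) (t n q)) (hφ_int (t n q) b)
    have e2 := intervalIntegral.integral_add_adjacent_intervals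
      (hφ_int a (t n p)) (hφ_int (t n p) b)
    linarith
  have hbd1 : |∫ s in a..(t n p), φ s| ≤ (M₀/h) * δ := by
    have hb := intervalIntegral.norm_integral_le_of_norm_le_const
      (C := M₀/h) (f := φ) (a := a) (b := t n p)
      (fun s _ => by rw [Real.norm_eq_abs]; exact hφ_bound s)
    rw [Real.norm_eq_abs] at hb
    refine hb.trans ?_
    apply mul_le_mul_of_nonneg_left _ (by positivity)
    rw [abs_of_nonneg (by linarith)]
    linarith
  have hbd2 : |∫ s in (t n q)..b, φ s| ≤ (M₀/h) * δ := by
    have hb := intervalIntegral.norm_integral_le_of_norm_le_const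
      (C := M₀/h) (f := φ) (a := t n q) (b := b)
      (fun s _ => by rw [Real.norm_eq_abs]; exact hφ_bound s)
    rw [Real.norm_eq_abs] at hb
    refine hb.trans ?_
    apply mul_le_mul_of_nonneg_left _ (by positivity)
    rw [abs_of_nonneg (by linarith)]
    linarith
  -- assembly
  set W' : ℝ := ∑ i ∈ Finset.Ico p q, (1/(2*(n:ℝ))) * (G (t n i) + G (t n (i+1))) with hW'_def
  set I1 : ℝ := ∫ s in a..(t n p), φ s with hI1_def
  set I2 : ℝ := ∫ s in (t n p)..(t n q), φ s with hI2_def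
  set I3 : ℝ := ∫ s in (t n q)..b, φ s with hI3_def
  have hmain : |trapSum t n x h (fun s => phiK K x h s / f s) - ∫ u in (-1:ℝ)..1, K u|
      ≤ 2*Mf*n*h*Eterm + (M₀/h)*δ + (M₀/h)*δ := by
    rw [hW, hLint, hsplit]
    have e : W' - (I1 + I2 + I3) = ((W' - I2) + (-I1)) + (-I3) := by ring
    rw [e]
    have t1 : |((W' - I2) + (-I1)) + (-I3)| ≤ |W' - I2| + |I1| + |I3| := by
      calc |((W' - I2) + (-I1)) + (-I3)| ≤ |(W' - I2) + (-I1)| + |(-I3)| := abs_add_le _ _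
        _ ≤ (|W' - I2| + |(-I1)|) + |(-I3)| := by linarith [abs_add_le (W' - I2) (-I1)]
        _ = |W' - I2| + |I1| + |I3| := by rw [abs_neg, abs_neg]
    refine t1.trans ?_
    have t2 : |W' - I2| ≤ 2*Mf*n*h*Eterm :=
      hsum.trans (mul_le_mul_of_nonneg_right hcount hEterm0)
    linarith
  refine hmain.trans ?_
  -- final arithmetic
  have hcfn : (0:ℝ) < cf * n := by positivity
  have heqL : 2*Mf*n*h*Eterm + (M₀/h)*δ + (M₀/h)*δ
      = 2*Mf^2*M₁/(cf^3*(n*h)) + (2*Mf^2*M₀*Lf/cf^4)*(1/n) + 2*M₀/(cf*(n*h)) := by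
    rw [hEterm_def, hLipG_def, hδ_def]
    field_simp
    ring
  have heqR : (2*Mf^2*M₁/cf^3 + 2*Mf^2*M₀*Lf/cf^4 + 2*M₀/cf)/((n:ℝ)*h)
      = 2*Mf^2*M₁/(cf^3*(n*h)) + (2*Mf^2*M₀*Lf/cf^4)*(1/(n*h)) + 2*M₀/(cf*(n*h)) := by
    field_simp
  have hmid : (2*Mf^2*M₀*Lf/cf^4)*(1/(n:ℝ)) ≤ (2*Mf^2*M₀*Lf/cf^4)*(1/((n:ℝ)*h)) := by
    apply mul_le_mul_of_nonneg_left _ (by positivity)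
    apply one_div_le_one_div_of_le (by positivity)
    have := mul_le_mul_of_nonneg_left hh1 hn0.le
    linarith
  rw [heqL, heqR]
  linarith

theorem trapezoidal_weights_converge
    (f : ℝ → ℝ) (cf : ℝ) (hcf : 0 < cf)
    (hf_lb : ∀ s ∈ Set.Icc (0:ℝ) 1, cf ≤ f s)
    (hf_lip : ∃ L : NNReal, LipschitzOnWith L f (Set.Icc (0:ℝ) 1))
    (hf_density : ∫ s in (0:ℝ)..1, f s = 1)
    (t : ℕ → ℕ → ℝ)
    (ht_mem : ∀ n i : ℕ, 1 ≤ i → i ≤ n → t n i ∈ Set.Icc (0:ℝ) 1)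
    (ht_def : ∀ n i : ℕ, 1 ≤ i → i ≤ n →
      ∫ s in (0:ℝ)..(t n i), f s = (i : ℝ) / n)
    (ht_mono : ∀ n : ℕ, StrictMonoOn (t n) (Set.Icc 1 n))
    (K : ℝ → ℝ)
    (hK_even : ∀ u : ℝ, K (-u) = K u)
    (hK_supp : ∀ u : ℝ, u ∉ Set.Icc (-1:ℝ) 1 → K u = 0)
    (hK_smooth : ContDiff ℝ 2 K)
    (hK''_lip : ∃ L : NNReal,
      LipschitzOnWith L (iteratedDeriv 2 K) (Set.Icc (-1:ℝ) 1))
    (x : ℝ) (hx : x ∈ Set.Ioo (0:ℝ) 1)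
    (h : ℕ → ℝ) (hh_pos : ∀ n : ℕ, 0 < h n)
    (hh_lim : Tendsto h atTop (𝓝 0))
    (hnh : Tendsto (fun n : ℕ => (n : ℝ) * h n) atTop atTop) :
    Tendsto (fun n : ℕ => trapSum t n x (h n) (fun s => phiK K x (h n) s / f s))
      atTop (𝓝 (∫ u in (-1:ℝ)..1, K u)) := by
  obtain ⟨Lf, hLfw⟩ := hf_lip
  have hf_cont : ContinuousOn f (Set.Icc 0 1) := hLfw.continuousOn
  obtain ⟨Mf, hMfb⟩ := (isCompact_Icc (a := (0:ℝ)) (b := 1)).exists_bound_of_continuousOn hf_cont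
  have hf_ub : ∀ s ∈ Set.Icc (0:ℝ) 1, f s ≤ Mf := by
    intro s hs
    have := hMfb s hs
    rw [Real.norm_eq_abs] at this
    exact (abs_le.mp this).2
  have hf_lip2 : ∀ s ∈ Set.Icc (0:ℝ) 1, ∀ u ∈ Set.Icc (0:ℝ) 1,
      |f s - f u| ≤ (Lf:ℝ) * |s - u| := by
    intro s hs u hu
    have := hLfw.dist_le_mul s hs u hu
    simpa [Real.dist_eq] using this
  have hLf0 : (0:ℝ) ≤ (Lf:ℝ) := Lf.coe_nonneg
  have hK_cont : Continuous K := hK_smooth.continuous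
  obtain ⟨C0, hC0⟩ := (isCompact_Icc (a := (-1:ℝ)) (b := 1)).exists_bound_of_continuousOn
    hK_cont.continuousOn
  set M₀ : ℝ := max C0 0 with hM₀_def
  have hM₀ : ∀ u : ℝ, |K u| ≤ M₀ := by
    intro u
    by_cases hu : u ∈ Set.Icc (-1:ℝ) 1
    · exact le_trans (by simpa [Real.norm_eq_abs] using hC0 u hu) (le_max_left _ _)
    · rw [hK_supp u hu, abs_zero, hM₀_def]
      exact le_max_right C0 0
  have hKd_cont : Continuous (deriv K) := hK_smooth.continuous_deriv (by norm_num)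
  obtain ⟨C1, hC1⟩ := (isCompact_Icc (a := (-1:ℝ)) (b := 1)).exists_bound_of_continuousOn
    hKd_cont.continuousOn
  set M₁ : ℝ := max C1 0 with hM₁_def
  have hM₁0 : 0 ≤ M₁ := le_max_right _ _
  have hKderiv0 : ∀ u : ℝ, u ∉ Set.Icc (-1:ℝ) 1 → deriv K u = 0 := by
    intro u hu
    have hop : IsOpen (Set.Icc (-1:ℝ) 1)ᶜ := isClosed_Icc.isOpen_compl
    have hev : K =ᶠ[𝓝 u] (fun _ => (0:ℝ)) :=
      Filter.eventuallyEq_of_mem (hop.mem_nhds hu) (fun v hv => hK_supp v hv)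
    rw [hev.deriv_eq]
    exact deriv_const u 0
  have hM₁ : ∀ u : ℝ, ‖deriv K u‖ ≤ M₁ := by
    intro u
    by_cases hu : u ∈ Set.Icc (-1:ℝ) 1
    · exact le_trans (hC1 u hu) (le_max_left _ _)
    · rw [hKderiv0 u hu]
      simpa using hM₁0
  have hK_lip : ∀ u v : ℝ, |K u - K v| ≤ M₁ * |u - v| := by
    intro u v
    have := Convex.norm_image_sub_le_of_norm_deriv_le (s := (Set.univ : Set ℝ))
      (fun y _ => (hK_smooth.differentiable (by norm_num)).differentiableAt)
      (fun y _ => hM₁ y) convex_univ (Set.mem_univ v) (Set.mem_univ u)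
    simpa [Real.norm_eq_abs] using this
  set C : ℝ := 2*Mf^2*M₁/cf^3 + 2*Mf^2*M₀*(Lf:ℝ)/cf^4 + 2*M₀/cf with hC_def
  have hconv : Tendsto (fun n : ℕ => C / ((n:ℝ) * h n)) atTop (𝓝 0) := by
    have h0 := hnh.inv_tendsto_atTop
    have h1 := h0.const_mul C
    simpa [div_eq_mul_inv, mul_zero] using h1
  have e1 : ∀ᶠ n : ℕ in atTop, h n < x := hh_lim.eventually_lt_const hx.1
  have e2 : ∀ᶠ n : ℕ in atTop, h n < 1 - x :=
    hh_lim.eventually_lt_const (by linarith [hx.2])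
  have e3 : ∀ᶠ n : ℕ in atTop, h n < 1 := hh_lim.eventually_lt_const one_pos
  have e4 : ∀ᶠ n : ℕ in atTop, 4/cf ≤ (n:ℝ) * h n := hnh.eventually_ge_atTop (4/cf)
  have e5 : ∀ᶠ n : ℕ in atTop, 1 ≤ n := eventually_ge_atTop 1
  have hev : ∀ᶠ n : ℕ in atTop,
      ‖trapSum t n x (h n) (fun s => phiK K x (h n) s / f s) - ∫ u in (-1:ℝ)..1, K u‖
        ≤ C / ((n:ℝ) * h n) := by
    filter_upwards [e1, e2, e3, e4, e5] with n h1 h2 h3 h4 h5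
    rw [Real.norm_eq_abs]
    rw [hC_def]
    apply quant f cf Mf (Lf:ℝ) hcf hLf0 hf_lb hf_ub hf_lip2 hf_cont hf_density
      t ht_mem ht_def ht_mono K hK_cont M₀ M₁ hM₁0 hM₀ hK_lip x n (h n)
      (hh_pos n) h3.le (by linarith) (by linarith) ?_ h5
    have := (div_le_iff₀ hcf).mp h4
    linarith
  have hzero := squeeze_zero_norm' hev hconv
  exact tendsto_sub_nhds_zero_iff.mp hzero
end
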